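/- arXiv:math/0702218 — 8 statements merged into one kernel-verified Lean document; each statement's English description precedes it below -/
import Mathlib

section
/- Let n ≥ 1, A ∈ ℂ^{n×n} and δ > 0. Then there exists a nonzero polynomial q in two variables with real coefficients such that every point λ = x + iy on the topological boundary of the δ-pseudospectrum Spec_δ(A) satisfies q(x, y) = 0 (i.e., ∂Spec_δ(A) is contained in a real algebraic curve). -/
open Matrix

/-- The operator norm of a complex matrix, induced by the Euclidean norm on `ℂⁿ`. -/
noncomputable def l2OpNorm {ι : Type*} [Fintype ι] [DecidableEq ι]
    (E : Matrix ι ι ℂ) : ℝ :=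
  ‖Matrix.toEuclideanCLM (𝕜 := ℂ) E‖

/-- The δ-pseudospectrum of a matrix: the union of the spectra of all perturbations
`A + E` with `‖E‖ ≤ δ` (operator norm induced by the Euclidean norm). -/
noncomputable def pseudospectrum {ι : Type*} [Fintype ι] [DecidableEq ι]
    (δ : ℝ) (A : Matrix ι ι ℂ) : Set ℂ :=
  ⋃ E ∈ {E : Matrix ι ι ℂ | l2OpNorm E ≤ δ}, spectrum ℂ (A + E)

/-!
Write `s(z)` for the smallest singular value of `A - z`, i.e. the minimum of `‖(A - z) v‖` over
unit vectors `v`. A perturbation of norm `‖E‖` can only make `A - z + E` singular if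
`s(z) ≤ ‖E‖`, and the rank-one perturbation `x ↦ -⟪v, x⟫ (A - z) v` at a minimising `v` attains
this bound, so `Spec_δ(A) = {z | s(z) ≤ δ}`. Since `s` is 1-Lipschitz, the boundary lies in
`{z | s(z) = δ}`, and there `δ²` is an eigenvalue of `(A - z)ᴴ (A - z)`: the minimiser `v` is a
constrained extremum of the Rayleigh quotient. Hence the boundary lies in the zero set of
`det ((A - z)ᴴ (A - z) - δ²)`, a real polynomial in `Re z, Im z`. It is not the zero polynomial,
because for `|z|` large `s(z) > |δ|`.
-/

open Metric

namespace ContinuousLinearMap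

variable {𝕜 E F : Type*} [RCLike 𝕜] [NormedAddCommGroup E] [InnerProductSpace 𝕜 E]
  [NormedAddCommGroup F] [InnerProductSpace 𝕜 F]

/-- In finite dimension this is the smallest of `LinearMap.singularValues`
(Courant–Fischer). -/
noncomputable def minSingularValue (T : E →L[𝕜] F) : ℝ :=
  ⨅ v : sphere (0 : E) 1, ‖T v‖

variable (T : E →L[𝕜] F)

theorem minSingularValue_nonneg : 0 ≤ T.minSingularValue :=
  Real.iInf_nonneg fun _ => norm_nonneg _

theorem minSingularValue_le_norm_apply {v : E} (hv : ‖v‖ = 1) : T.minSingularValue ≤ ‖T v‖ :=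
  ciInf_le ⟨0, by rintro _ ⟨w, rfl⟩; exact norm_nonneg _⟩
    (⟨v, by simpa using hv⟩ : sphere (0 : E) 1)

theorem minSingularValue_mul_norm_le (v : E) : T.minSingularValue * ‖v‖ ≤ ‖T v‖ := by
  rcases eq_or_ne v 0 with rfl | hv
  · simp
  have hv' : 0 < ‖v‖ := norm_pos_iff.mpr hv
  have h := T.minSingularValue_le_norm_apply (v := ((‖v‖⁻¹ : ℝ) : 𝕜) • v) (by
    rw [norm_smul, RCLike.norm_ofReal, abs_inv, abs_norm, inv_mul_cancel₀ hv'.ne'])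
  rw [map_smul, norm_smul, RCLike.norm_ofReal, abs_inv, abs_norm] at h
  rwa [le_inv_mul_iff₀ hv', mul_comm] at h

theorem le_minSingularValue [Nontrivial E] {c : ℝ} (h : ∀ v, ‖v‖ = 1 → c ≤ ‖T v‖) :
    c ≤ T.minSingularValue :=
  have := NormedSpace.sphere_nonempty_rclike 𝕜 (E := E) zero_le_one
  le_ciInf fun ⟨v, hv⟩ => h v (by simpa using hv)

theorem exists_isMinOn_norm_apply [FiniteDimensional 𝕜 E] [Nontrivial E] :
    ∃ v ∈ sphere (0 : E) 1, IsMinOn (‖T ·‖) (sphere (0 : E) 1) v ∧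
      ‖T v‖ = T.minSingularValue := by
  have := FiniteDimensional.proper_rclike 𝕜 E
  obtain ⟨v, hv, hmin⟩ := (isCompact_sphere (0 : E) 1).exists_isMinOn
    (Set.nonempty_coe_sort.mp (NormedSpace.sphere_nonempty_rclike 𝕜 zero_le_one))
    (continuous_norm.comp T.continuous).continuousOn
  refine ⟨v, hv, hmin, le_antisymm ?_ (T.minSingularValue_le_norm_apply (by simpa using hv))⟩
  exact T.le_minSingularValue fun w hw => hmin (by simpa using hw)

theorem minSingularValue_le_add_norm_sub [Nontrivial E] (S : E →L[𝕜] F) :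
    T.minSingularValue ≤ S.minSingularValue + ‖T - S‖ := by
  suffices T.minSingularValue - ‖T - S‖ ≤ S.minSingularValue by linarith
  refine S.le_minSingularValue fun v hv => ?_
  calc T.minSingularValue - ‖T - S‖ ≤ ‖T v‖ - ‖(T - S) v‖ := by
        gcongr
        · exact T.minSingularValue_le_norm_apply hv
        · simpa [hv] using (T - S).le_opNorm v
    _ ≤ ‖S v‖ := by simpa using norm_sub_norm_le (T v) (T v - S v)

theorem lipschitzWith_minSingularValue [Nontrivial E] :
    LipschitzWith 1 (minSingularValue : (E →L[𝕜] F) → ℝ) :=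
  LipschitzWith.of_le_add fun T S => by
    simpa [dist_eq_norm] using T.minSingularValue_le_add_norm_sub S

section Complete

variable [CompleteSpace E] [CompleteSpace F]

theorem adjoint_comp_self_apply_eq_of_isMinOn {v : E} (hv : v ∈ sphere (0 : E) 1)
    (hmin : IsMinOn (‖T ·‖) (sphere (0 : E) 1) v) :
    (adjoint T ∘L T) v = ((‖T v‖ ^ 2 : ℝ) : 𝕜) • v := by
  have hv1 : ‖v‖ = 1 := by simpa using hv
  have hre (x : E) : (adjoint T ∘L T).reApplyInnerSelf x = ‖T x‖ ^ 2 := by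
    rw [reApplyInnerSelf_apply, comp_apply, adjoint_inner_left, inner_self_eq_norm_sq]
  have hextr : IsLocalExtrOn (adjoint T ∘L T).reApplyInnerSelf (sphere (0 : E) ‖v‖) v := by
    refine Or.inl (IsMinOn.localize fun x hx => ?_)
    rw [hv1] at hx
    simp only [Set.mem_ofPred_eq, hre]
    gcongr
    exact hmin hx
  rw [T.isPositive_adjoint_comp_self.isSelfAdjoint.eq_smul_self_of_isLocalExtrOn hextr,
    rayleighQuotient, hre, hv1]
  simp

theorem minSingularValue_sq_le_of_adjoint_comp_self_apply_eq {v : E} (hv : v ≠ 0) {c : ℝ}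
    (h : (adjoint T ∘L T) v = (c : 𝕜) • v) : T.minSingularValue ^ 2 ≤ c := by
  have hTv : ‖T v‖ ^ 2 = c * ‖v‖ ^ 2 := by
    have := congrArg (fun w => RCLike.re (inner 𝕜 v w)) h
    simp only [comp_apply, adjoint_inner_right, inner_smul_right] at this
    rwa [inner_self_eq_norm_sq, inner_self_eq_norm_sq_to_K, ← RCLike.ofReal_pow,
      ← RCLike.ofReal_mul, RCLike.ofReal_re] at this
  have hv' : 0 < ‖v‖ ^ 2 := by positivity
  have hsq := pow_le_pow_left₀ (mul_nonneg T.minSingularValue_nonneg (norm_nonneg v))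
    (T.minSingularValue_mul_norm_le v) 2
  rw [mul_pow, hTv] at hsq
  exact le_of_mul_le_mul_right hsq hv'

end Complete

section Endomorphism

variable (T : E →L[𝕜] E) (μ : 𝕜)

theorem norm_sub_opNorm_le_minSingularValue_sub_smul [Nontrivial E] :
    ‖μ‖ - ‖T‖ ≤ (T - μ • 1).minSingularValue := by
  refine le_minSingularValue _ fun v hv => ?_
  calc ‖μ‖ - ‖T‖ ≤ ‖μ • v‖ - ‖T v‖ := by
        rw [norm_smul, hv, mul_one]
        gcongr
        simpa [hv] using T.le_opNorm v
    _ ≤ ‖(T - μ • 1) v‖ := by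
        have := norm_sub_norm_le (μ • v) (T v)
        rw [norm_sub_rev] at this
        simpa using this

variable [FiniteDimensional 𝕜 E]

theorem mem_spectrum_iff_exists_apply_eq_smul {T : E →L[𝕜] E} {μ : 𝕜} :
    μ ∈ spectrum 𝕜 T ↔ ∃ v ≠ 0, T v = μ • v := by
  have := FiniteDimensional.complete 𝕜 E
  rw [spectrum_eq, ← Module.End.hasEigenvalue_iff_mem_spectrum]
  refine ⟨fun h => ?_, fun ⟨v, hv, hTv⟩ => Module.End.hasEigenvalue_of_hasEigenvector
    ⟨Module.End.mem_eigenspace_iff.mpr hTv, hv⟩⟩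
  obtain ⟨v, hv, hv0⟩ := h.exists_hasEigenvector
  exact ⟨v, hv0, Module.End.mem_eigenspace_iff.mp hv⟩

theorem minSingularValue_sub_smul_le_of_mem_spectrum_add {P : E →L[𝕜] E}
    (h : μ ∈ spectrum 𝕜 (T + P)) : (T - μ • 1).minSingularValue ≤ ‖P‖ := by
  obtain ⟨v, hv, hPv⟩ := mem_spectrum_iff_exists_apply_eq_smul.mp h
  have hTv : (T - μ • 1) v = -P v := by
    rw [_root_.add_apply] at hPv
    simp [← hPv]
  refine le_of_mul_le_mul_right ?_ (norm_pos_iff.mpr hv)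
  calc (T - μ • 1).minSingularValue * ‖v‖ ≤ ‖(T - μ • 1) v‖ := minSingularValue_mul_norm_le _ v
    _ = ‖P v‖ := by rw [hTv, norm_neg]
    _ ≤ ‖P‖ * ‖v‖ := P.le_opNorm v

theorem exists_norm_eq_minSingularValue_mem_spectrum_add [Nontrivial E] :
    ∃ P : E →L[𝕜] E, ‖P‖ = (T - μ • 1).minSingularValue ∧ μ ∈ spectrum 𝕜 (T + P) := by
  obtain ⟨v, hv, -, hmin⟩ := (T - μ • 1).exists_isMinOn_norm_apply
  have hv1 : ‖v‖ = 1 := by simpa using hv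
  refine ⟨-InnerProductSpace.rankOne 𝕜 ((T - μ • 1) v) v,
    by rw [norm_neg, InnerProductSpace.norm_rankOne, hv1, mul_one, hmin], ?_⟩
  refine mem_spectrum_iff_exists_apply_eq_smul.mpr ⟨v, by simp [← norm_ne_zero_iff, hv1], ?_⟩
  simp [inner_self_eq_norm_sq_to_K, hv1]

theorem exists_norm_le_mem_spectrum_add_iff [Nontrivial E] {δ : ℝ} :
    (∃ P : E →L[𝕜] E, ‖P‖ ≤ δ ∧ μ ∈ spectrum 𝕜 (T + P)) ↔
      (T - μ • 1).minSingularValue ≤ δ := by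
  refine ⟨fun ⟨P, hP, hμ⟩ => (T.minSingularValue_sub_smul_le_of_mem_spectrum_add μ hμ).trans hP,
    fun h => ?_⟩
  obtain ⟨P, hP, hμ⟩ := T.exists_norm_eq_minSingularValue_mem_spectrum_add μ
  exact ⟨P, hP.le.trans h, hμ⟩

end Endomorphism

end ContinuousLinearMap

namespace Matrix

variable {𝕜 ι : Type*} [RCLike 𝕜] [Fintype ι] [DecidableEq ι]

theorem det_eq_zero_iff_exists_toEuclideanCLM_apply_eq_zero (M : Matrix ι ι 𝕜) :
    M.det = 0 ↔ ∃ v ≠ 0, toEuclideanCLM (𝕜 := 𝕜) M v = 0 := by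
  rw [← exists_mulVec_eq_zero_iff]
  refine ⟨fun ⟨v, hv, hMv⟩ => ⟨WithLp.toLp 2 v, by simpa using hv, ?_⟩,
    fun ⟨v, hv, hMv⟩ => ⟨WithLp.ofLp v, by simpa using hv, ?_⟩⟩
  · rw [toEuclideanCLM_toLp, hMv]; rfl
  · rw [← ofLp_toEuclideanCLM, hMv]; rfl

theorem toEuclideanCLM_conjTranspose_mul_self_sub (M : Matrix ι ι 𝕜) (c : 𝕜) :
    toEuclideanCLM (𝕜 := 𝕜) (Mᴴ * M - c • 1)
      = ContinuousLinearMap.adjoint (toEuclideanCLM (𝕜 := 𝕜) M) ∘L toEuclideanCLM (𝕜 := 𝕜) M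
        - c • 1 := by
  rw [map_sub, map_smul, map_one, map_mul, ← star_eq_conjTranspose, map_star,
    ContinuousLinearMap.star_eq_adjoint, ContinuousLinearMap.mul_def]

theorem IsHermitian.ofReal_re_det {M : Matrix ι ι 𝕜} (hM : M.IsHermitian) :
    (RCLike.re M.det : 𝕜) = M.det := by
  rw [← RCLike.conj_eq_iff_re, ← RCLike.star_def, ← det_conjTranspose, hM.eq]

theorem det_conjTranspose_mul_self_sub_sq_minSingularValue_eq_zero [Nonempty ι]
    (M : Matrix ι ι 𝕜) :
    (Mᴴ * M - (((toEuclideanCLM (𝕜 := 𝕜) M).minSingularValue ^ 2 : ℝ) : 𝕜) • 1).det = 0 := by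
  set T := toEuclideanCLM (𝕜 := 𝕜) M
  obtain ⟨v, hv, hmin, hTv⟩ := T.exists_isMinOn_norm_apply
  rw [det_eq_zero_iff_exists_toEuclideanCLM_apply_eq_zero]
  refine ⟨v, ne_zero_of_mem_unit_sphere ⟨v, hv⟩, ?_⟩
  rw [toEuclideanCLM_conjTranspose_mul_self_sub, _root_.sub_apply,
    T.adjoint_comp_self_apply_eq_of_isMinOn hv hmin, hTv]
  simp

theorem re_det_conjTranspose_mul_self_sub_sq_ne_zero {M : Matrix ι ι 𝕜} {δ : ℝ}
    (h : |δ| < (toEuclideanCLM (𝕜 := 𝕜) M).minSingularValue) :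
    RCLike.re (Mᴴ * M - ((δ ^ 2 : ℝ) : 𝕜) • 1).det ≠ 0 := by
  intro hdet
  have hherm : (Mᴴ * M - ((δ ^ 2 : ℝ) : 𝕜) • 1).IsHermitian :=
    (isHermitian_conjTranspose_mul_self M).sub (isHermitian_one.smul (RCLike.conj_ofReal _))
  rw [← RCLike.ofReal_eq_zero (K := 𝕜), hherm.ofReal_re_det,
    det_eq_zero_iff_exists_toEuclideanCLM_apply_eq_zero] at hdet
  obtain ⟨v, hv, hMv⟩ := hdet
  rw [toEuclideanCLM_conjTranspose_mul_self_sub, _root_.sub_apply, sub_eq_zero] at hMv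
  have hle := ContinuousLinearMap.minSingularValue_sq_le_of_adjoint_comp_self_apply_eq _ hv hMv
  have hlt := pow_lt_pow_left₀ h (abs_nonneg δ) two_ne_zero
  rw [sq_abs] at hlt
  linarith

theorem exists_abs_lt_minSingularValue_sub_smul [Nonempty ι] (A : Matrix ι ι 𝕜) (δ : ℝ) :
    ∃ z : 𝕜, |δ| < (toEuclideanCLM (𝕜 := 𝕜) (A - z • 1)).minSingularValue := by
  set T := toEuclideanCLM (𝕜 := 𝕜) A
  refine ⟨((‖T‖ + |δ| + 1 : ℝ) : 𝕜), ?_⟩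
  have := T.norm_sub_opNorm_le_minSingularValue_sub_smul ((‖T‖ + |δ| + 1 : ℝ) : 𝕜)
  rw [RCLike.norm_ofReal, abs_of_nonneg (by positivity)] at this
  rw [map_sub, map_smul, map_one]
  linarith

end Matrix

namespace MvPolynomial

noncomputable def reCoeffs {σ : Type*} (p : MvPolynomial σ ℂ) : MvPolynomial σ ℝ :=
  ∑ m ∈ p.support, monomial m (p.coeff m).re

theorem eval_reCoeffs {σ : Type*} (p : MvPolynomial σ ℂ) (x : σ → ℝ) :
    eval x (reCoeffs p) = (eval (fun i => (x i : ℂ)) p).re := by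
  simp only [reCoeffs, map_sum, eval_monomial, Finsupp.prod]
  rw [eval_eq, Complex.re_sum]
  refine Finset.sum_congr rfl fun m _ => ?_
  push_cast [← Complex.ofReal_pow, ← Complex.ofReal_prod]
  rw [Complex.re_mul_ofReal]

end MvPolynomial

namespace Matrix

open MvPolynomial

variable {ι : Type*} [DecidableEq ι]

theorem map_eval_map_C_sub_smul_one {σ : Type*} (A : Matrix ι ι ℂ) (p : MvPolynomial σ ℂ)
    (x : σ → ℂ) : (A.map C - p • 1).map (eval x) = A - eval x p • 1 := by
  ext i j
  rcases eq_or_ne i j with rfl | h <;> simp [*]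

variable [Fintype ι]

noncomputable def pseudospectralPolyMatrix (A : Matrix ι ι ℂ) (δ : ℝ) :
    Matrix ι ι (MvPolynomial (Fin 2) ℂ) :=
  (Aᴴ.map C - (X 0 - C Complex.I * X 1 : MvPolynomial (Fin 2) ℂ) • 1)
    * (A.map C - (X 0 + C Complex.I * X 1 : MvPolynomial (Fin 2) ℂ) • 1)
    - (C ((δ ^ 2 : ℝ) : ℂ) : MvPolynomial (Fin 2) ℂ) • 1

theorem map_eval_pseudospectralPolyMatrix (A : Matrix ι ι ℂ) (δ : ℝ) (z : ℂ) :
    (pseudospectralPolyMatrix A δ).map (eval ![(z.re : ℂ), (z.im : ℂ)])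
      = (A - z • 1)ᴴ * (A - z • 1) - ((δ ^ 2 : ℝ) : ℂ) • 1 := by
  have hz : (z.re : ℂ) + Complex.I * z.im = z := by rw [mul_comm, Complex.re_add_im]
  have hz' : (z.re : ℂ) - Complex.I * z.im = star z := by apply Complex.ext <;> simp
  rw [pseudospectralPolyMatrix, Matrix.map_sub _ (map_sub _), Matrix.map_mul,
    map_eval_map_C_sub_smul_one, map_eval_map_C_sub_smul_one, Matrix.map_smul' _ _ _ (map_mul _),
    Matrix.map_one _ (map_zero _) (map_one _)]
  simp [hz, hz', conjTranspose_sub, conjTranspose_smul]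

theorem eval_reCoeffs_det_pseudospectralPolyMatrix (A : Matrix ι ι ℂ) (δ : ℝ) (z : ℂ) :
    eval ![z.re, z.im] (reCoeffs (pseudospectralPolyMatrix A δ).det)
      = ((A - z • 1)ᴴ * (A - z • 1) - ((δ ^ 2 : ℝ) : ℂ) • 1).det.re := by
  have hx : (fun i => ((![z.re, z.im] i : ℝ) : ℂ)) = ![(z.re : ℂ), (z.im : ℂ)] := by
    ext i
    fin_cases i <;> rfl
  rw [eval_reCoeffs, hx, RingHom.map_det, RingHom.mapMatrix_apply,
    map_eval_pseudospectralPolyMatrix]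

end Matrix

section Pseudospectrum

variable {ι : Type*} [Fintype ι] [DecidableEq ι] [Nonempty ι]

theorem pseudospectrum_eq_setOf_minSingularValue_le (δ : ℝ) (A : Matrix ι ι ℂ) :
    pseudospectrum δ A = {z | (toEuclideanCLM (𝕜 := ℂ) (A - z • 1)).minSingularValue ≤ δ} := by
  ext z
  rw [Set.mem_ofPred_eq, map_sub, map_smul, map_one,
    ← ContinuousLinearMap.exists_norm_le_mem_spectrum_add_iff]
  simp only [pseudospectrum, l2OpNorm, Set.mem_iUnion, Set.mem_ofPred_eq, exists_prop]
  constructor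
  · rintro ⟨E, hE, hz⟩
    exact ⟨toEuclideanCLM (𝕜 := ℂ) E, hE, by rwa [← map_add, AlgEquiv.spectrum_eq]⟩
  · rintro ⟨P, hP, hz⟩
    obtain ⟨E, rfl⟩ : ∃ E, toEuclideanCLM (𝕜 := ℂ) E = P := toEuclideanCLM.surjective P
    exact ⟨E, hP, by rwa [← map_add, AlgEquiv.spectrum_eq] at hz⟩

theorem frontier_pseudospectrum_subset (δ : ℝ) (A : Matrix ι ι ℂ) :
    frontier (pseudospectrum δ A)
      ⊆ {z | (toEuclideanCLM (𝕜 := ℂ) (A - z • 1)).minSingularValue = δ} := by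
  rw [pseudospectrum_eq_setOf_minSingularValue_le]
  refine frontier_le_subset_eq (ContinuousLinearMap.lipschitzWith_minSingularValue.continuous.comp
    ?_) continuous_const
  simp only [map_sub, map_smul, map_one]
  fun_prop

end Pseudospectrum

theorem boundary_pseudospectrum_subset_algebraic_curve_general
    {n : ℕ} (hn : 1 ≤ n) (A : Matrix (Fin n) (Fin n) ℂ) (δ : ℝ) :
    ∃ q : MvPolynomial (Fin 2) ℝ, q ≠ 0 ∧
      ∀ lam ∈ frontier (pseudospectrum δ A),
        MvPolynomial.eval ![lam.re, lam.im] q = 0 := by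
  have : Nonempty (Fin n) := ⟨⟨0, hn⟩⟩
  refine ⟨MvPolynomial.reCoeffs (pseudospectralPolyMatrix A δ).det, fun hq => ?_,
    fun z hz => ?_⟩
  · obtain ⟨z, hz⟩ := exists_abs_lt_minSingularValue_sub_smul A δ
    have hval := eval_reCoeffs_det_pseudospectralPolyMatrix A δ z
    rw [hq, map_zero] at hval
    exact re_det_conjTranspose_mul_self_sub_sq_ne_zero hz hval.symm
  · rw [eval_reCoeffs_det_pseudospectralPolyMatrix, ← frontier_pseudospectrum_subset δ A hz]
    exact (congrArg Complex.re
      (det_conjTranspose_mul_self_sub_sq_minSingularValue_eq_zero _)).trans Complex.zero_re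

/-- The boundary of the δ-pseudospectrum is contained in a real algebraic curve:
there is a nonzero real polynomial `q` in two variables vanishing at every
boundary point `λ = x + iy`. -/
theorem boundary_pseudospectrum_subset_algebraic_curve
    {n : ℕ} (hn : 1 ≤ n) (A : Matrix (Fin n) (Fin n) ℂ) (δ : ℝ) (hδ : 0 < δ) :
    ∃ q : MvPolynomial (Fin 2) ℝ, q ≠ 0 ∧
      ∀ lam ∈ frontier (pseudospectrum δ A),
        MvPolynomial.eval ![lam.re, lam.im] q = 0 :=
  boundary_pseudospectrum_subset_algebraic_curve_general hn A δ
end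

section
/- Let n ≥ 1, A ∈ ℂ^{n×n} and δ > 0. Every point λ on the topological boundary ∂Spec_δ(A) of the δ-pseudospectrum satisfies s_n(λ) = δ, where s_n(λ) is the smallest singular value of λI − A. -/
open Matrix

/-- The smallest singular value of `λI - A`: the square root of the smallest
eigenvalue of the Hermitian matrix `(λI - A)ᴴ (λI - A)`. -/
noncomputable def sMin {n : ℕ} (A : Matrix (Fin n) (Fin n) ℂ) (lam : ℂ) : ℝ :=
  Real.sqrt (⨅ i, (Matrix.isHermitian_conjTranspose_mul_self
    (lam • (1 : Matrix (Fin n) (Fin n) ℂ) - A)).eigenvalues i)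

/-!
`λ ∈ Spec_δ(A)` iff `s_n(λ) ≤ δ`. If `(A + E) v = λ v` with `v ≠ 0`, then
`s_n(λ) ‖v‖ ≤ ‖(λI - A) v‖ = ‖E v‖ ≤ ‖E‖ ‖v‖`. Conversely, for a unit vector `x` with
`‖(λI - A) x‖ = s_n(λ)` (an eigenvector of `(λI - A)ᴴ(λI - A)` for its least eigenvalue), the
rank-one map `E y = ⟪x, y⟫ (λI - A) x` has norm `s_n(λ)` and `(A + E) x = λ x`.
Since `λ ↦ s_n(λ)` is `1`-Lipschitz, the sublevel set `{s_n ≤ δ}` has its frontier in the level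
set `{s_n = δ}`.
-/

namespace Matrix

variable {𝕜 ι : Type*} [RCLike 𝕜] [Fintype ι] [DecidableEq ι]

lemma norm_toEuclideanCLM_apply_sq (M : Matrix ι ι 𝕜) (x : EuclideanSpace 𝕜 ι) :
    ‖toEuclideanCLM (𝕜 := 𝕜) M x‖ ^ 2 =
      RCLike.re (inner 𝕜 x (toEuclideanCLM (𝕜 := 𝕜) (Mᴴ * M) x)) := by
  rw [map_mul, ← star_eq_conjTranspose, map_star, ContinuousLinearMap.star_eq_adjoint,
    mul_apply_eq_comp, ContinuousLinearMap.adjoint_inner_right,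
    inner_self_eq_norm_sq]

namespace IsHermitian

variable {A : Matrix ι ι 𝕜} (hA : A.IsHermitian)

lemma toEuclideanCLM_eigenvectorBasis (j : ι) :
    toEuclideanCLM (𝕜 := 𝕜) A (hA.eigenvectorBasis j) =
      (hA.eigenvalues j : 𝕜) • hA.eigenvectorBasis j := by
  apply WithLp.ofLp_injective
  rw [ofLp_toEuclideanCLM, hA.mulVec_eigenvectorBasis, WithLp.ofLp_smul,
    RCLike.real_smul_eq_coe_smul (K := 𝕜)]

lemma repr_toEuclideanCLM_apply (x : EuclideanSpace 𝕜 ι) (j : ι) :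
    hA.eigenvectorBasis.repr (toEuclideanCLM (𝕜 := 𝕜) A x) j =
      hA.eigenvalues j * hA.eigenvectorBasis.repr x j := by
  have hsymm :=
    (isSymmetric_toEuclideanLin_iff.mpr hA).apply_clm (T := toEuclideanCLM (𝕜 := 𝕜) A)
  rw [OrthonormalBasis.repr_apply_apply, OrthonormalBasis.repr_apply_apply, ← hsymm,
    hA.toEuclideanCLM_eigenvectorBasis, inner_smul_left, RCLike.conj_ofReal]

lemma re_inner_toEuclideanCLM_apply (x : EuclideanSpace 𝕜 ι) :
    RCLike.re (inner 𝕜 x (toEuclideanCLM (𝕜 := 𝕜) A x)) =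
      ∑ j, hA.eigenvalues j * ‖hA.eigenvectorBasis.repr x j‖ ^ 2 := by
  rw [← hA.eigenvectorBasis.repr.inner_map_map, PiLp.inner_apply, map_sum]
  refine Finset.sum_congr rfl fun j _ => ?_
  rw [hA.repr_toEuclideanCLM_apply, ← smul_eq_mul, inner_smul_right, RCLike.re_ofReal_mul,
    inner_self_eq_norm_sq]

lemma iInf_eigenvalues_mul_norm_sq_le (x : EuclideanSpace 𝕜 ι) :
    (⨅ i, hA.eigenvalues i) * ‖x‖ ^ 2 ≤ RCLike.re (inner 𝕜 x (toEuclideanCLM (𝕜 := 𝕜) A x)) := by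
  rw [hA.re_inner_toEuclideanCLM_apply, ← hA.eigenvectorBasis.repr.norm_map x,
    EuclideanSpace.norm_sq_eq, Finset.mul_sum]
  gcongr with j
  exact ciInf_le (Finite.bddBelow_range _) j

end IsHermitian

noncomputable def minSingularValue (M : Matrix ι ι 𝕜) : ℝ :=
  √(⨅ i, (isHermitian_conjTranspose_mul_self M).eigenvalues i)

lemma minSingularValue_mul_norm_le (M : Matrix ι ι 𝕜) (x : EuclideanSpace 𝕜 ι) :
    minSingularValue M * ‖x‖ ≤ ‖toEuclideanCLM (𝕜 := 𝕜) M x‖ := by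
  rw [minSingularValue, ← Real.sqrt_sq (norm_nonneg x), ← Real.sqrt_mul' _ (sq_nonneg _),
    ← Real.sqrt_sq (norm_nonneg (toEuclideanCLM (𝕜 := 𝕜) M x)), norm_toEuclideanCLM_apply_sq]
  exact Real.sqrt_le_sqrt ((isHermitian_conjTranspose_mul_self M).iInf_eigenvalues_mul_norm_sq_le x)

lemma exists_norm_eq_one_and_norm_apply_eq_minSingularValue [Nonempty ι] (M : Matrix ι ι 𝕜) :
    ∃ x : EuclideanSpace 𝕜 ι, ‖x‖ = 1 ∧ ‖toEuclideanCLM (𝕜 := 𝕜) M x‖ = minSingularValue M := by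
  set hB := isHermitian_conjTranspose_mul_self M
  obtain ⟨i, hi⟩ := exists_eq_ciInf_of_finite (f := hB.eigenvalues)
  refine ⟨hB.eigenvectorBasis i, hB.eigenvectorBasis.orthonormal.1 i, ?_⟩
  rw [minSingularValue, ← hi, ← Real.sqrt_sq (norm_nonneg _), norm_toEuclideanCLM_apply_sq,
    hB.toEuclideanCLM_eigenvectorBasis, inner_smul_right, RCLike.re_ofReal_mul,
    inner_self_eq_norm_sq, hB.eigenvectorBasis.orthonormal.1 i, one_pow, mul_one]

lemma minSingularValue_le_add_norm_sub [Nonempty ι] (M N : Matrix ι ι 𝕜) :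
    minSingularValue M ≤ minSingularValue N + ‖toEuclideanCLM (𝕜 := 𝕜) (M - N)‖ := by
  obtain ⟨x, hx_norm, hx_min⟩ := exists_norm_eq_one_and_norm_apply_eq_minSingularValue N
  calc minSingularValue M = minSingularValue M * ‖x‖ := by rw [hx_norm, mul_one]
    _ ≤ ‖toEuclideanCLM (𝕜 := 𝕜) M x‖ := minSingularValue_mul_norm_le M x
    _ = ‖toEuclideanCLM (𝕜 := 𝕜) N x + toEuclideanCLM (𝕜 := 𝕜) (M - N) x‖ := by
      rw [map_sub, _root_.sub_apply, add_sub_cancel]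
    _ ≤ minSingularValue N + ‖toEuclideanCLM (𝕜 := 𝕜) (M - N)‖ := by
      rw [← hx_min]
      exact norm_add_le_of_le le_rfl (ContinuousLinearMap.unit_le_opNorm _ _ hx_norm.le)

lemma lipschitzWith_minSingularValue_smul_one_sub [Nonempty ι] (A : Matrix ι ι 𝕜) :
    LipschitzWith 1 fun z : 𝕜 => minSingularValue (z • 1 - A) := by
  refine LipschitzWith.of_le_add fun z w => ?_
  refine (minSingularValue_le_add_norm_sub _ _).trans (add_le_add_right ?_ _)
  rw [sub_sub_sub_cancel_right, ← sub_smul, map_smul, map_one, dist_eq_norm]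
  exact (norm_smul_le _ _).trans (mul_le_of_le_one_right (norm_nonneg _)
    (ContinuousLinearMap.norm_id_le (𝕜 := 𝕜) (E := EuclideanSpace 𝕜 ι)))

lemma mem_spectrum_iff_exists_toEuclideanCLM_apply_eq (B : Matrix ι ι 𝕜) (z : 𝕜) :
    z ∈ spectrum 𝕜 B ↔ ∃ v ≠ 0, toEuclideanCLM (𝕜 := 𝕜) B v = z • v := by
  rw [← spectrum_toLpLin 2, ← Module.End.hasEigenvalue_iff_mem_spectrum,
    Module.End.hasEigenvalue_iff, Submodule.ne_bot_iff]
  simp only [Module.End.mem_eigenspace_iff]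
  exact exists_congr fun v => and_comm

end Matrix

open InnerProductSpace in
lemma mem_pseudospectrum_iff {ι : Type*} [Fintype ι] [DecidableEq ι] [Nonempty ι]
    {δ : ℝ} (A : Matrix ι ι ℂ) (z : ℂ) :
    z ∈ pseudospectrum δ A ↔ minSingularValue (z • 1 - A) ≤ δ := by
  simp only [pseudospectrum, Set.mem_iUnion, Set.mem_ofPred_eq, exists_prop,
    mem_spectrum_iff_exists_toEuclideanCLM_apply_eq]
  constructor
  · rintro ⟨E, hE, v, hv_ne, hv⟩
    have hEv : toEuclideanCLM (𝕜 := ℂ) (z • 1 - A) v = toEuclideanCLM (𝕜 := ℂ) E v := by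
      rw [map_sub, map_smul, map_one, _root_.sub_apply, _root_.smul_apply,
        one_apply_eq_self, ← hv, map_add, _root_.add_apply, add_sub_cancel_left]
    refine le_of_mul_le_mul_right ?_ (norm_pos_iff.mpr hv_ne)
    calc minSingularValue (z • 1 - A) * ‖v‖ ≤ ‖toEuclideanCLM (𝕜 := ℂ) (z • 1 - A) v‖ :=
          minSingularValue_mul_norm_le _ v
      _ ≤ l2OpNorm E * ‖v‖ := hEv ▸ (toEuclideanCLM (𝕜 := ℂ) E).le_opNorm v
      _ ≤ δ * ‖v‖ := by gcongr
  · intro h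
    obtain ⟨x, hx_norm, hx_min⟩ := exists_norm_eq_one_and_norm_apply_eq_minSingularValue (z • 1 - A)
    set E := rankOne ℂ (toEuclideanCLM (𝕜 := ℂ) (z • 1 - A) x) x
    refine ⟨(toEuclideanCLM (𝕜 := ℂ) (n := ι)).symm E, ?_, x,
      norm_ne_zero_iff.mp (hx_norm ▸ one_ne_zero), ?_⟩
    · rwa [l2OpNorm, StarAlgEquiv.apply_symm_apply, norm_rankOne, hx_norm, mul_one, hx_min]
    · rw [map_add, StarAlgEquiv.apply_symm_apply, _root_.add_apply, rankOne_apply,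
        inner_self_eq_norm_sq_to_K, hx_norm]
      simp

theorem frontier_pseudospectrum_sMin_eq_general
    {n : ℕ} (hn : 1 ≤ n) (A : Matrix (Fin n) (Fin n) ℂ) (δ : ℝ) :
    ∀ lam ∈ frontier (pseudospectrum δ A), sMin A lam = δ := by
  have : Nonempty (Fin n) := ⟨⟨0, hn⟩⟩
  have hsublevel : pseudospectrum δ A = {z | minSingularValue (z • 1 - A) ≤ δ} :=
    Set.ext fun z => mem_pseudospectrum_iff A z
  exact fun lam hlam => frontier_le_subset_eq
    (lipschitzWith_minSingularValue_smul_one_sub A).continuous continuous_const (hsublevel ▸ hlam)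

/-- Every point on the topological boundary of the δ-pseudospectrum satisfies
`s_n(λ) = δ`, where `s_n(λ)` is the smallest singular value of `λI - A`. -/
theorem frontier_pseudospectrum_sMin_eq
    {n : ℕ} (hn : 1 ≤ n) (A : Matrix (Fin n) (Fin n) ℂ) (δ : ℝ) (hδ : 0 < δ) :
    ∀ lam ∈ frontier (pseudospectrum δ A), sMin A lam = δ :=
  frontier_pseudospectrum_sMin_eq_general hn A δ
end

section
/- Let n ≥ 1 and A ∈ ℂ^{n×n}. There exists a polynomial d in three variables x, y, S with real coefficients such that for all real x, y, S one has d(x, y, S) = det(S·I − P(x+iy)ᴴP(x+iy)) where P(λ) = λI − A (in particular this determinant is real), and consequently the union of the singular-value surfaces ⋃_{j=1}^n Σ_j = {(x, y, S) ∈ ℝ³ : S is an eigenvalue of P(x+iy)ᴴP(x+iy)} is exactly the zero set {(x,y,S) ∈ ℝ³ : d(x,y,S) = 0}, hence a real algebraic variety. -/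
/-!
With `x`, `y`, `S` as indeterminates, `P(x+iy)ᴴ` is the polynomial matrix `(x - iy)·I - Aᴴ`, so
`det(S·I - P(x+iy)ᴴ P(x+iy))` is a complex polynomial in `x`, `y`, `S`. At real points its value is
`∏ⱼ (S - σⱼ)` over the eigenvalues `σⱼ` of the Hermitian matrix `PᴴP`, a real number, so the real
part of the polynomial has the same values, and it vanishes exactly when `S` is one of the `σⱼ`.
-/

open Matrix MvPolynomial

namespace MvPolynomial

variable {σ : Type*}

noncomputable def rePart (p : MvPolynomial σ ℂ) : MvPolynomial σ ℝ :=
  ∑ m ∈ p.support, monomial m (p.coeff m).re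

theorem eval_rePart (p : MvPolynomial σ ℂ) (v : σ → ℝ) :
    eval v p.rePart = (eval (fun i => (v i : ℂ)) p).re := by
  rw [rePart, map_sum, eval_eq, Complex.re_sum]
  refine Finset.sum_congr rfl fun m _ => ?_
  rw [eval_monomial, Finsupp.prod]
  norm_cast
  rw [Complex.re_mul_ofReal]

end MvPolynomial

variable {m : Type*} [Fintype m] [DecidableEq m]

theorem Matrix.IsHermitian.det_smul_one_sub {𝕜 : Type*} [RCLike 𝕜] {M : Matrix m m 𝕜}
    (hM : M.IsHermitian) (S : ℝ) :
    det ((S : 𝕜) • (1 : Matrix m m 𝕜) - M) = ((∏ i, (S - hM.eigenvalues i) : ℝ) : 𝕜) := by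
  rw [smul_one_eq_diagonal, ← scalar_apply, ← eval_charpoly, hM.charpoly_eq]
  simp [Polynomial.eval_prod]

/-- The variables `X 0`, `X 1`, `X 2` stand for `x`, `y`, `S`. -/
noncomputable def singularSurfacePoly (A : Matrix m m ℂ) : MvPolynomial (Fin 3) ℂ :=
  det ((X 2 : MvPolynomial (Fin 3) ℂ) • 1 -
    ((X 0 - X 1 * C Complex.I : MvPolynomial (Fin 3) ℂ) • 1 - Aᴴ.map C) *
      ((X 0 + X 1 * C Complex.I : MvPolynomial (Fin 3) ℂ) • 1 - A.map C))

theorem eval_singularSurfacePoly (A : Matrix m m ℂ) (x y S : ℝ) :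
    eval (fun i => ((![x, y, S] i : ℝ) : ℂ)) (singularSurfacePoly A) =
      det ((S : ℂ) • (1 : Matrix m m ℂ) -
        (((x : ℂ) + y * Complex.I) • (1 : Matrix m m ℂ) - A)ᴴ *
          (((x : ℂ) + y * Complex.I) • (1 : Matrix m m ℂ) - A)) := by
  set f : MvPolynomial (Fin 3) ℂ →+* ℂ := eval fun i => ((![x, y, S] i : ℝ) : ℂ)
  have map_map_C (B : Matrix m m ℂ) : (B.map C).map f = B := by
    simp [f, Matrix.map_map, Function.comp_def]
  rw [singularSurfacePoly, RingHom.map_det, RingHom.mapMatrix_apply]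
  simp only [Matrix.map_sub _ (map_sub f), Matrix.map_mul, map_smul' f _ _ (map_mul f),
    Matrix.map_one _ (map_zero f) (map_one f), map_map_C]
  simp [f, conjTranspose_smul, sub_eq_add_neg]

theorem eval_rePart_singularSurfacePoly (A : Matrix m m ℂ) (x y S : ℝ) :
    eval ![x, y, S] (singularSurfacePoly A).rePart =
      ∏ i, (S - (isHermitian_conjTranspose_mul_self
        (((x : ℂ) + y * Complex.I) • (1 : Matrix m m ℂ) - A)).eigenvalues i) := by
  rw [eval_rePart, eval_singularSurfacePoly]
  exact congrArg Complex.re ((isHermitian_conjTranspose_mul_self _).det_smul_one_sub S)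

theorem exists_real_polynomial_det_singular_surfaces_general
    {n : ℕ} (A : Matrix (Fin n) (Fin n) ℂ) :
    ∃ d : MvPolynomial (Fin 3) ℝ,
      ∀ x y S : ℝ,
        ((MvPolynomial.eval ![x, y, S] d : ℝ) : ℂ) =
            Matrix.det ((S : ℂ) • (1 : Matrix (Fin n) (Fin n) ℂ) -
              (((x : ℂ) + y * Complex.I) • (1 : Matrix (Fin n) (Fin n) ℂ) - A)ᴴ *
                (((x : ℂ) + y * Complex.I) • (1 : Matrix (Fin n) (Fin n) ℂ) - A)) ∧
        ((∃ i, (Matrix.isHermitian_conjTranspose_mul_self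
            (((x : ℂ) + y * Complex.I) • (1 : Matrix (Fin n) (Fin n) ℂ) - A)).eigenvalues i = S)
          ↔ MvPolynomial.eval ![x, y, S] d = 0) := by
  refine ⟨(singularSurfacePoly A).rePart, fun x y S => ?_⟩
  rw [eval_rePart_singularSurfacePoly, Finset.prod_eq_zero_iff]
  set P := ((x : ℂ) + y * Complex.I) • (1 : Matrix (Fin n) (Fin n) ℂ) - A
  constructor
  · exact ((isHermitian_conjTranspose_mul_self P).det_smul_one_sub S).symm
  · simp only [Finset.mem_univ, true_and, sub_eq_zero, eq_comm (a := S)]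

/-- The union of the singular-value surfaces `⋃ Σ_j` is a real algebraic variety:
there is a real polynomial `d(x, y, S)` whose value equals
`det(S·I − P(x+iy)ᴴ P(x+iy))` with `P(λ) = λI − A` (in particular this determinant
is real), and `S` is an eigenvalue of `P(x+iy)ᴴ P(x+iy)` exactly when
`d(x, y, S) = 0`. -/
theorem exists_real_polynomial_det_singular_surfaces
    {n : ℕ} (hn : 1 ≤ n) (A : Matrix (Fin n) (Fin n) ℂ) :
    ∃ d : MvPolynomial (Fin 3) ℝ,
      ∀ x y S : ℝ,
        ((MvPolynomial.eval ![x, y, S] d : ℝ) : ℂ) =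
            Matrix.det ((S : ℂ) • (1 : Matrix (Fin n) (Fin n) ℂ) -
              (((x : ℂ) + y * Complex.I) • (1 : Matrix (Fin n) (Fin n) ℂ) - A)ᴴ *
                (((x : ℂ) + y * Complex.I) • (1 : Matrix (Fin n) (Fin n) ℂ) - A)) ∧
        ((∃ i, (Matrix.isHermitian_conjTranspose_mul_self
            (((x : ℂ) + y * Complex.I) • (1 : Matrix (Fin n) (Fin n) ℂ) - A)).eigenvalues i = S)
          ↔ MvPolynomial.eval ![x, y, S] d = 0) :=
  exists_real_polynomial_det_singular_surfaces_general A
end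

section
/- Let n ≥ 1, let S ∈ ℂ^{n×n} be upper triangular with diagonal entries α_i = S_{ii}, and let σ be any permutation of {1,…,n}. Then there exists a unitary matrix V ∈ ℂ^{n×n} such that R = VᴴSV is upper triangular with diagonal entries R_{ii} = α_{σ(i)}, and for all indices i, j: i and j are block equivalent with respect to R if and only if σ(i) and σ(j) are block equivalent with respect to S. -/
open Matrix

/-- Indices `i` and `j` are directly related for a matrix `T` if `i ≠ j` and
`T i j ≠ 0` or `T j i ≠ 0`. -/
def DirectlyRelated {n : ℕ} (T : Matrix (Fin n) (Fin n) ℂ) (i j : Fin n) : Prop :=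
  i ≠ j ∧ (T i j ≠ 0 ∨ T j i ≠ 0)

/-- Block equivalence of indices: the equivalence relation generated by direct
relation. -/
def BlockEquiv {n : ℕ} (T : Matrix (Fin n) (Fin n) ℂ) (i j : Fin n) : Prop :=
  Relation.EqvGen (DirectlyRelated T) i j

namespace SchurAux

variable {n : ℕ}

lemma blockEquiv_mono {T R : Matrix (Fin n) (Fin n) ℂ}
    (h : ∀ i j, DirectlyRelated T i j → BlockEquiv R i j) :
    ∀ i j, BlockEquiv T i j → BlockEquiv R i j := by
  intro i j hij
  induction hij with
  | rel x y h' => exact h x y h'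
  | refl x => exact Relation.EqvGen.refl x
  | symm x y _ ih => exact Relation.EqvGen.symm x y ih
  | trans x y z _ _ ih1 ih2 => exact Relation.EqvGen.trans x y z ih1 ih2

lemma blockEquiv_perm {T R : Matrix (Fin n) (Fin n) ℂ} (σ : Equiv.Perm (Fin n))
    (h : ∀ i j, R i j = T (σ i) (σ j)) (i j : Fin n) :
    BlockEquiv R i j ↔ BlockEquiv T (σ i) (σ j) := by
  constructor
  · intro hij
    induction hij with
    | rel x y h' =>
      obtain ⟨hne, h2⟩ := h'
      rw [h, h] at h2
      exact Relation.EqvGen.rel _ _ ⟨fun e => hne (σ.injective e), h2⟩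
    | refl x => exact Relation.EqvGen.refl _
    | symm x y _ ih => exact Relation.EqvGen.symm _ _ ih
    | trans x y z _ _ ih1 ih2 => exact Relation.EqvGen.trans _ _ _ ih1 ih2
  · intro hij
    have key : ∀ x y, BlockEquiv T x y → BlockEquiv R (σ.symm x) (σ.symm y) := by
      intro x y hxy
      induction hxy with
      | rel x y h' =>
        obtain ⟨hne, h2⟩ := h'
        refine Relation.EqvGen.rel _ _ ⟨fun e => hne (σ.symm.injective e), ?_⟩
        rw [h, h, Equiv.apply_symm_apply, Equiv.apply_symm_apply]
        exact h2
      | refl x => exact Relation.EqvGen.refl _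
      | symm x y _ ih => exact Relation.EqvGen.symm _ _ ih
      | trans x y z _ _ ih1 ih2 => exact Relation.EqvGen.trans _ _ _ ih1 ih2
    have := key _ _ hij
    simpa using this

lemma blockEquiv_congr_swap {T : Matrix (Fin n) (Fin n) ℂ} {a b : Fin n}
    (hab : BlockEquiv T a b) (i j : Fin n) :
    BlockEquiv T i j ↔ BlockEquiv T (Equiv.swap a b i) (Equiv.swap a b j) := by
  have key : ∀ i, BlockEquiv T (Equiv.swap a b i) i := by
    intro i
    rcases eq_or_ne i a with rfl | hia
    · rw [Equiv.swap_apply_left]; exact Relation.EqvGen.symm _ _ hab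
    rcases eq_or_ne i b with rfl | hib
    · rw [Equiv.swap_apply_right]; exact hab
    · rw [Equiv.swap_apply_of_ne_of_ne hia hib]; exact Relation.EqvGen.refl _
  constructor
  · intro hij
    exact Relation.EqvGen.trans _ _ _ (Relation.EqvGen.trans _ _ _ (key i) hij)
      (Relation.EqvGen.symm _ _ (key j))
  · intro hij
    exact Relation.EqvGen.trans _ _ _ (Relation.EqvGen.trans _ _ _
      (Relation.EqvGen.symm _ _ (key i)) hij) (key j)

def givens (a b : Fin n) (g11 g12 g21 g22 : ℂ) : Matrix (Fin n) (Fin n) ℂ :=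
  Matrix.of fun i j =>
    if i = a then (if j = a then g11 else if j = b then g12 else 0)
    else if i = b then (if j = a then g21 else if j = b then g22 else 0)
    else if j = i then 1 else 0

lemma mul_givens {a b : Fin n} (hab : a ≠ b) (g11 g12 g21 g22 : ℂ)
    (M : Matrix (Fin n) (Fin n) ℂ) (i j : Fin n) :
    (M * givens a b g11 g12 g21 g22) i j =
      if j = a then M i a * g11 + M i b * g21
      else if j = b then M i a * g12 + M i b * g22
      else M i j := by
  rw [Matrix.mul_apply,
    ← Finset.sum_erase_add _ _ (Finset.mem_univ b),
    ← Finset.sum_erase_add _ _ (Finset.mem_erase.mpr ⟨hab, Finset.mem_univ a⟩)]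
  have h1 : ∀ p ∈ (Finset.univ.erase b).erase a,
      M i p * givens a b g11 g12 g21 g22 p j = if j = p then M i p else 0 := by
    intro p hp
    simp only [Finset.mem_erase] at hp
    simp [givens, hp.1, hp.2.1, mul_ite]
  rw [Finset.sum_congr rfl h1, Finset.sum_ite_eq]
  by_cases hja : j = a <;> by_cases hjb : j = b
  · exact absurd (hja.symm.trans hjb) hab
  · subst hja; simp [givens, hab, hab.symm, Finset.mem_erase]
  · subst hjb; simp [givens, hab, hab.symm, Finset.mem_erase]
  · simp [givens, hja, hjb, hab, Finset.mem_erase]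

lemma givens_mul {a b : Fin n} (hab : a ≠ b) (g11 g12 g21 g22 : ℂ)
    (M : Matrix (Fin n) (Fin n) ℂ) (i j : Fin n) :
    (givens a b g11 g12 g21 g22 * M) i j =
      if i = a then g11 * M a j + g12 * M b j
      else if i = b then g21 * M a j + g22 * M b j
      else M i j := by
  rw [Matrix.mul_apply,
    ← Finset.sum_erase_add _ _ (Finset.mem_univ b),
    ← Finset.sum_erase_add _ _ (Finset.mem_erase.mpr ⟨hab, Finset.mem_univ a⟩)]
  have h1 : ∀ p ∈ (Finset.univ.erase b).erase a,
      givens a b g11 g12 g21 g22 i p * M p j = if p = i then M p j else 0 := by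
    intro p hp
    simp only [Finset.mem_erase] at hp
    by_cases hia : i = a
    · simp [givens, hia, hp.1, hp.2.1, Ne.symm hp.1, Ne.symm hp.2.1]
    · by_cases hib : i = b
      · simp [givens, hia, hib, hp.1, hp.2.1, Ne.symm hp.1, Ne.symm hp.2.1]
      · simp [givens, hia, hib, hp.1, hp.2.1]
  rw [Finset.sum_congr rfl h1, Finset.sum_ite_eq']
  by_cases hia : i = a <;> by_cases hib : i = b
  · exact absurd (hia.symm.trans hib) hab
  · subst hia; simp [givens, hab, hab.symm, Finset.mem_erase]
  · subst hib; simp [givens, hab, hab.symm, Finset.mem_erase]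
  · simp [givens, hia, hib, Ne.symm hia, Ne.symm hib, Finset.mem_erase]

lemma givens_conjTranspose {a b : Fin n} (hab : a ≠ b) (g11 g12 g21 g22 : ℂ) :
    (givens a b g11 g12 g21 g22)ᴴ =
      givens a b (starRingEnd ℂ g11) (starRingEnd ℂ g21) (starRingEnd ℂ g12)
        (starRingEnd ℂ g22) := by
  ext i j
  simp only [conjTranspose_apply, givens, Matrix.of_apply]
  by_cases hia : i = a <;> by_cases hib : i = b <;>
      by_cases hja : j = a <;> by_cases hjb : j = b <;>
      by_cases hij : i = j <;>
    simp_all [hab, Ne.symm hab, _root_.map_one, map_zero, eq_comm]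


lemma givens_apply {a b : Fin n} (g11 g12 g21 g22 : ℂ) (i j : Fin n) :
    givens a b g11 g12 g21 g22 i j =
      if i = a then (if j = a then g11 else if j = b then g12 else 0)
      else if i = b then (if j = a then g21 else if j = b then g22 else 0)
      else if j = i then 1 else 0 := rfl

lemma adjacent_swap (T : Matrix (Fin n) (Fin n) ℂ)
    (hT : ∀ i j : Fin n, j < i → T i j = 0) {a b : Fin n} (hab : (a : ℕ) + 1 = (b : ℕ)) :
    ∃ V : Matrix (Fin n) (Fin n) ℂ,
      Vᴴ * V = 1 ∧
      (∀ i j : Fin n, j < i → (Vᴴ * T * V) i j = 0) ∧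
      (∀ i : Fin n, (Vᴴ * T * V) i i = T (Equiv.swap a b i) (Equiv.swap a b i)) ∧
      (∀ i j : Fin n, BlockEquiv (Vᴴ * T * V) i j ↔
        BlockEquiv T (Equiv.swap a b i) (Equiv.swap a b j)) := by
  have hne : a ≠ b := by intro h; rw [h] at hab; omega
  have hlt : a < b := by rw [Fin.lt_def]; omega
  have hBa : T b a = 0 := hT b a hlt
  by_cases hβ : T a b = 0
  · -- pure swap case
    have key : ∀ i j, ((givens a b 0 1 1 0)ᴴ * T * givens a b 0 1 1 0) i j
        = T (Equiv.swap a b i) (Equiv.swap a b j) := by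
      intro i j
      rw [givens_conjTranspose hne]
      simp only [map_zero, _root_.map_one]
      rw [mul_givens hne]
      simp only [givens_mul hne]
      rw [Equiv.swap_apply_def, Equiv.swap_apply_def]
      split_ifs <;> simp_all
    refine ⟨givens a b 0 1 1 0, ?_, ?_, ?_, fun i j => blockEquiv_perm _ key i j⟩
    · -- unitary
      ext i j
      rw [givens_conjTranspose hne]
      simp only [map_zero, _root_.map_one]
      rw [mul_givens hne]
      simp only [givens_apply, Matrix.one_apply]
      split_ifs <;> (try rfl) <;> (try norm_num) <;>
        (exfalso; clear key hT hBa hβ; simp only [Fin.ext_iff] at *; omega)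
    · -- triangular
      intro i j hji
      rw [key]
      rcases eq_or_ne j a with rfl | hja
      · rcases eq_or_ne i b with rfl | hib
        · rw [Equiv.swap_apply_left, Equiv.swap_apply_right]; exact hβ
        · have hia : i ≠ j := (ne_of_gt hji)
          rw [Equiv.swap_apply_left, Equiv.swap_apply_of_ne_of_ne hia hib]
          refine hT i b ?_
          rw [Fin.lt_def] at *
          have h2 := Fin.val_ne_of_ne hib
          omega
      · rcases eq_or_ne j b with rfl | hjb
        · have hib : i ≠ j := (ne_of_gt hji)
          have hia : i ≠ a := by
            intro h; subst h
            rw [Fin.lt_def] at hji; omega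
          rw [Equiv.swap_apply_right, Equiv.swap_apply_of_ne_of_ne hia hib]
          refine hT i a ?_
          rw [Fin.lt_def] at *
          have h2 := Fin.val_ne_of_ne hib
          omega
        · rw [Equiv.swap_apply_of_ne_of_ne hja hjb]
          rcases eq_or_ne i a with rfl | hia
          · rw [Equiv.swap_apply_left]
            refine hT b j ?_
            rw [Fin.lt_def] at *
            omega
          · rcases eq_or_ne i b with rfl | hib
            · rw [Equiv.swap_apply_right]
              refine hT a j ?_
              rw [Fin.lt_def] at *
              have h2 := Fin.val_ne_of_ne hja
              omega
            · rw [Equiv.swap_apply_of_ne_of_ne hia hib]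
              exact hT i j hji
    · intro i
      rw [key]
  · -- Givens rotation case
    have hq : (0:ℝ) < Complex.normSq (T a b) + Complex.normSq (T b b - T a a) :=
      add_pos_of_pos_of_nonneg (Complex.normSq_pos.mpr hβ) (Complex.normSq_nonneg _)
    set u := T a b with hu
    set v := T b b - T a a with hv
    set t : ℂ := (((Real.sqrt (Complex.normSq u + Complex.normSq v))⁻¹ : ℝ) : ℂ) with ht
    have hct : starRingEnd ℂ t = t := by rw [ht]; exact Complex.conj_ofReal _
    have h1 : t * t * (starRingEnd ℂ u * u + starRingEnd ℂ v * v) = 1 := by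
      have e1 : starRingEnd ℂ u * u + starRingEnd ℂ v * v
          = ((Complex.normSq u + Complex.normSq v : ℝ) : ℂ) := by
        rw [Complex.ofReal_add, Complex.normSq_eq_conj_mul_self,
          Complex.normSq_eq_conj_mul_self]
      rw [ht, e1, ← Complex.ofReal_mul, ← Complex.ofReal_mul]
      norm_cast
      rw [← mul_inv, Real.mul_self_sqrt hq.le]
      exact inv_mul_cancel₀ hq.ne'
    set G : Matrix (Fin n) (Fin n) ℂ :=
      givens a b (u * t) (-(starRingEnd ℂ v) * t) (v * t) (starRingEnd ℂ u * t) with hG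
    have hGH : Gᴴ = givens a b (starRingEnd ℂ u * t) (starRingEnd ℂ v * t)
        (-v * t) (u * t) := by
      rw [hG, givens_conjTranspose hne]
      simp [_root_.map_mul, map_neg, Complex.conj_conj, hct]
    have hN : ∀ p q, (Gᴴ * T) p q =
        if p = a then (starRingEnd ℂ u * t) * T a q + (starRingEnd ℂ v * t) * T b q
        else if p = b then (-v * t) * T a q + (u * t) * T b q
        else T p q := by
      intro p q
      rw [hGH, givens_mul hne]
    have hR : ∀ p q, (Gᴴ * T * G) p q =
        if q = a then (Gᴴ * T) p a * (u * t) + (Gᴴ * T) p b * (v * t)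
        else if q = b then (Gᴴ * T) p a * (-(starRingEnd ℂ v) * t)
          + (Gᴴ * T) p b * (starRingEnd ℂ u * t)
        else (Gᴴ * T) p q := by
      intro p q
      conv_lhs => rw [hG]
      rw [mul_givens hne]
    have hba : ¬ (b = a) := Ne.symm hne
    have hab' : ¬ (a = b) := hne
    have Fout : ∀ p q, p ≠ a → p ≠ b → q ≠ a → q ≠ b → (Gᴴ * T * G) p q = T p q := by
      intro p q hpa hpb hqa hqb
      rw [hR, if_neg hqa, if_neg hqb, hN, if_neg hpa, if_neg hpb]
    have Fia : ∀ p, p ≠ a → p ≠ b → (Gᴴ * T * G) p a = (T p a * u + T p b * v) * t := by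
      intro p hpa hpb
      rw [hR, if_pos rfl, hN, if_neg hpa, if_neg hpb, hN, if_neg hpa, if_neg hpb]
      ring
    have Fib : ∀ p, p ≠ a → p ≠ b → (Gᴴ * T * G) p b
        = (-(T p a * starRingEnd ℂ v) + T p b * starRingEnd ℂ u) * t := by
      intro p hpa hpb
      rw [hR, if_neg hba, if_pos rfl, hN, if_neg hpa, if_neg hpb, hN, if_neg hpa, if_neg hpb]
      ring
    have Faj : ∀ q, q ≠ a → q ≠ b → (Gᴴ * T * G) a q
        = (starRingEnd ℂ u * T a q + starRingEnd ℂ v * T b q) * t := by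
      intro q hqa hqb
      rw [hR, if_neg hqa, if_neg hqb, hN, if_pos rfl]
      ring
    have Fbj : ∀ q, q ≠ a → q ≠ b → (Gᴴ * T * G) b q
        = (-(v * T a q) + u * T b q) * t := by
      intro q hqa hqb
      rw [hR, if_neg hqa, if_neg hqb, hN, if_neg hba, if_pos rfl]
      ring
    have Faa : (Gᴴ * T * G) a a = T b b := by
      rw [hR, if_pos rfl, hN, if_pos rfl, hN, if_pos rfl, hBa]
      linear_combination T b b * h1 + t * t * (starRingEnd ℂ u) * u * hv
    have Fbb : (Gᴴ * T * G) b b = T a a := by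
      rw [hR, if_neg hba, if_pos rfl, hN, if_neg hba, if_pos rfl, hN, if_neg hba,
        if_pos rfl, hBa]
      linear_combination T a a * h1 - t * t * (starRingEnd ℂ u) * u * hv
    have Fab : (Gᴴ * T * G) a b = starRingEnd ℂ u := by
      rw [hR, if_neg hba, if_pos rfl, hN, if_pos rfl, hN, if_pos rfl, hBa]
      linear_combination starRingEnd ℂ u * h1
        + t * t * (starRingEnd ℂ u) * (starRingEnd ℂ v) * hv
    have Fba : (Gᴴ * T * G) b a = 0 := by
      rw [hR, if_pos rfl, hN, if_neg hba, if_pos rfl, hN, if_neg hba, if_pos rfl, hBa]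
      linear_combination (-(t * t * u * v)) * hv
    have ht0 : t ≠ 0 := by
      rw [ht]
      simp only [ne_eq, Complex.ofReal_eq_zero, inv_eq_zero]
      positivity
    -- invertibility of the 2x2 action on rows and columns
    have rowInv : ∀ p, p ≠ a → p ≠ b →
        ((T p a = 0 ∧ T p b = 0) ↔ ((Gᴴ * T * G) p a = 0 ∧ (Gᴴ * T * G) p b = 0)) := by
      intro p hpa hpb
      rw [Fia p hpa hpb, Fib p hpa hpb]
      constructor
      · rintro ⟨e1, e2⟩
        rw [e1, e2]
        constructor <;> ring
      · rintro ⟨e1, e2⟩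
        have hx : T p a = 0 := by
          linear_combination (t * starRingEnd ℂ u) * e1 - (t * v) * e2 - T p a * h1
        have hy : T p b = 0 := by
          linear_combination (t * starRingEnd ℂ v) * e1 + (t * u) * e2 - T p b * h1
        exact ⟨hx, hy⟩
    have colInv : ∀ q, q ≠ a → q ≠ b →
        ((T a q = 0 ∧ T b q = 0) ↔ ((Gᴴ * T * G) a q = 0 ∧ (Gᴴ * T * G) b q = 0)) := by
      intro q hqa hqb
      rw [Faj q hqa hqb, Fbj q hqa hqb]
      constructor
      · rintro ⟨e1, e2⟩
        rw [e1, e2]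
        constructor <;> ring
      · rintro ⟨e1, e2⟩
        have hx : T a q = 0 := by
          linear_combination (t * u) * e1 - (t * starRingEnd ℂ v) * e2 - T a q * h1
        have hy : T b q = 0 := by
          linear_combination (t * v) * e1 + (t * starRingEnd ℂ u) * e2 - T b q * h1
        exact ⟨hx, hy⟩
    have hTedge : BlockEquiv T a b := Relation.EqvGen.rel _ _ ⟨hne, Or.inl hβ⟩
    have hRedge : BlockEquiv (Gᴴ * T * G) a b := by
      refine Relation.EqvGen.rel _ _ ⟨hne, Or.inl ?_⟩
      rw [Fab]
      simpa using hβ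
    have hout : ∀ p, p ≠ a → p ≠ b →
        ((Gᴴ * T * G) p a ≠ 0 ∨ (Gᴴ * T * G) a p ≠ 0 ∨
         (Gᴴ * T * G) p b ≠ 0 ∨ (Gᴴ * T * G) b p ≠ 0) →
        BlockEquiv T p a ∧ BlockEquiv T p b := by
      intro p hpa hpb hor
      have hd : DirectlyRelated T p a ∨ DirectlyRelated T p b := by
        by_contra hcon
        push_neg at hcon
        simp only [DirectlyRelated, not_and_or, not_or, not_not, ne_eq] at hcon
        obtain ⟨c1, c2⟩ := hcon
        rcases c1 with h | ⟨hpa0, hap0⟩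
        · exact absurd h hpa
        rcases c2 with h | ⟨hpb0, hbp0⟩
        · exact absurd h hpb
        obtain ⟨r1, r2⟩ := (rowInv p hpa hpb).mp ⟨hpa0, hpb0⟩
        obtain ⟨r3, r4⟩ := (colInv p hpa hpb).mp ⟨hap0, hbp0⟩
        rcases hor with h | h | h | h
        · exact h r1
        · exact h r3
        · exact h r2
        · exact h r4
      rcases hd with h | h
      · have h1' : BlockEquiv T p a := Relation.EqvGen.rel _ _ h
        exact ⟨h1', Relation.EqvGen.trans _ _ _ h1' hTedge⟩
      · have h2' : BlockEquiv T p b := Relation.EqvGen.rel _ _ h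
        exact ⟨Relation.EqvGen.trans _ _ _ h2' (Relation.EqvGen.symm _ _ hTedge), h2'⟩
    have houtT : ∀ p, p ≠ a → p ≠ b →
        (T p a ≠ 0 ∨ T a p ≠ 0 ∨ T p b ≠ 0 ∨ T b p ≠ 0) →
        BlockEquiv (Gᴴ * T * G) p a ∧ BlockEquiv (Gᴴ * T * G) p b := by
      intro p hpa hpb hor
      have hd : DirectlyRelated (Gᴴ * T * G) p a ∨ DirectlyRelated (Gᴴ * T * G) p b := by
        by_contra hcon
        push_neg at hcon
        simp only [DirectlyRelated, not_and_or, not_or, not_not, ne_eq] at hcon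
        obtain ⟨c1, c2⟩ := hcon
        rcases c1 with h | ⟨hpa0, hap0⟩
        · exact absurd h hpa
        rcases c2 with h | ⟨hpb0, hbp0⟩
        · exact absurd h hpb
        obtain ⟨r1, r2⟩ := (rowInv p hpa hpb).mpr ⟨hpa0, hpb0⟩
        obtain ⟨r3, r4⟩ := (colInv p hpa hpb).mpr ⟨hap0, hbp0⟩
        rcases hor with h | h | h | h
        · exact h r1
        · exact h r3
        · exact h r2
        · exact h r4
      rcases hd with h | h
      · have h1' : BlockEquiv (Gᴴ * T * G) p a := Relation.EqvGen.rel _ _ h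
        exact ⟨h1', Relation.EqvGen.trans _ _ _ h1' hRedge⟩
      · have h2' : BlockEquiv (Gᴴ * T * G) p b := Relation.EqvGen.rel _ _ h
        exact ⟨Relation.EqvGen.trans _ _ _ h2' (Relation.EqvGen.symm _ _ hRedge), h2'⟩
    have dir1 : ∀ i j, DirectlyRelated (Gᴴ * T * G) i j → BlockEquiv T i j := by
      intro i j hd
      obtain ⟨hij, hor⟩ := hd
      by_cases hia : i = a
      · by_cases hjb : j = b
        · rw [hia, hjb]; exact hTedge
        · by_cases hja : j = a
          · exact absurd (hia.trans hja.symm) hij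
          · rw [hia]
            rw [hia] at hor
            refine Relation.EqvGen.symm _ _ (hout j hja hjb ?_).1
            rcases hor with h | h
            · exact Or.inr (Or.inl h)
            · exact Or.inl h
      · by_cases hib : i = b
        · by_cases hja : j = a
          · rw [hib, hja]; exact Relation.EqvGen.symm _ _ hTedge
          · by_cases hjb : j = b
            · exact absurd (hib.trans hjb.symm) hij
            · rw [hib]
              rw [hib] at hor
              refine Relation.EqvGen.symm _ _ (hout j hja hjb ?_).2
              rcases hor with h | h
              · exact Or.inr (Or.inr (Or.inr h))
              · exact Or.inr (Or.inr (Or.inl h))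
        · by_cases hja : j = a
          · rw [hja]
            rw [hja] at hor
            refine (hout i hia hib ?_).1
            rcases hor with h | h
            · exact Or.inl h
            · exact Or.inr (Or.inl h)
          · by_cases hjb : j = b
            · rw [hjb]
              rw [hjb] at hor
              refine (hout i hia hib ?_).2
              rcases hor with h | h
              · exact Or.inr (Or.inr (Or.inl h))
              · exact Or.inr (Or.inr (Or.inr h))
            · rw [Fout i j hia hib hja hjb, Fout j i hja hjb hia hib] at hor
              exact Relation.EqvGen.rel _ _ ⟨hij, hor⟩
    have dir2 : ∀ i j, DirectlyRelated T i j → BlockEquiv (Gᴴ * T * G) i j := by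
      intro i j hd
      obtain ⟨hij, hor⟩ := hd
      by_cases hia : i = a
      · by_cases hjb : j = b
        · rw [hia, hjb]; exact hRedge
        · by_cases hja : j = a
          · exact absurd (hia.trans hja.symm) hij
          · rw [hia]
            rw [hia] at hor
            refine Relation.EqvGen.symm _ _ (houtT j hja hjb ?_).1
            rcases hor with h | h
            · exact Or.inr (Or.inl h)
            · exact Or.inl h
      · by_cases hib : i = b
        · by_cases hja : j = a
          · rw [hib, hja]; exact Relation.EqvGen.symm _ _ hRedge
          · by_cases hjb : j = b
            · exact absurd (hib.trans hjb.symm) hij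
            · rw [hib]
              rw [hib] at hor
              refine Relation.EqvGen.symm _ _ (houtT j hja hjb ?_).2
              rcases hor with h | h
              · exact Or.inr (Or.inr (Or.inr h))
              · exact Or.inr (Or.inr (Or.inl h))
        · by_cases hja : j = a
          · rw [hja]
            rw [hja] at hor
            refine (houtT i hia hib ?_).1
            rcases hor with h | h
            · exact Or.inl h
            · exact Or.inr (Or.inl h)
          · by_cases hjb : j = b
            · rw [hjb]
              rw [hjb] at hor
              refine (houtT i hia hib ?_).2
              rcases hor with h | h
              · exact Or.inr (Or.inr (Or.inl h))
              · exact Or.inr (Or.inr (Or.inr h))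
            · rw [← Fout i j hia hib hja hjb, ← Fout j i hja hjb hia hib] at hor
              exact Relation.EqvGen.rel _ _ ⟨hij, hor⟩
    have Ha : ∀ q, Gᴴ a q = if q = a then starRingEnd ℂ u * t
        else if q = b then starRingEnd ℂ v * t else 0 := by
      intro q
      rw [hGH, givens_apply, if_pos rfl]
    have Hb : ∀ q, Gᴴ b q = if q = a then -v * t else if q = b then u * t else 0 := by
      intro q
      rw [hGH, givens_apply, if_neg hba, if_pos rfl]
    have Hrow : ∀ p, p ≠ a → p ≠ b → ∀ q, Gᴴ p q = if q = p then 1 else 0 := by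
      intro p hpa hpb q
      rw [hGH, givens_apply, if_neg hpa, if_neg hpb]
    have hU : ∀ p q, (Gᴴ * G) p q =
        if q = a then Gᴴ p a * (u * t) + Gᴴ p b * (v * t)
        else if q = b then Gᴴ p a * (-(starRingEnd ℂ v) * t) + Gᴴ p b * (starRingEnd ℂ u * t)
        else Gᴴ p q := by
      intro p q
      conv_lhs => rw [hG]
      rw [mul_givens hne]
    have hunit : Gᴴ * G = 1 := by
      have h1ab : (1 : Matrix (Fin n) (Fin n) ℂ) a b = 0 := Matrix.one_apply_ne hne
      have h1ba : (1 : Matrix (Fin n) (Fin n) ℂ) b a = 0 := Matrix.one_apply_ne hba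
      ext p q
      rw [hU]
      by_cases hpa : p = a
      · rw [hpa]
        by_cases hqa : q = a
        · rw [hqa]
          simp only [Ha, eq_self_iff_true, if_true, hba, if_false, Matrix.one_apply_eq]
          linear_combination h1
        · by_cases hqb : q = b
          · rw [hqb]
            simp only [Ha, eq_self_iff_true, if_true, hba, if_false, h1ab]
            ring
          · simp only [Ha, hqa, hqb, if_false, Matrix.one_apply_ne (Ne.symm hqa)]
      · by_cases hpb : p = b
        · rw [hpb]
          by_cases hqa : q = a
          · rw [hqa]
            simp only [Hb, eq_self_iff_true, if_true, hba, if_false, h1ba]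
            ring
          · by_cases hqb : q = b
            · rw [hqb]
              simp only [Hb, eq_self_iff_true, if_true, hba, if_false, Matrix.one_apply_eq]
              linear_combination h1
            · simp only [Hb, hqa, hqb, if_false, Matrix.one_apply_ne (Ne.symm hqb)]
        · by_cases hqa : q = a
          · rw [hqa]
            simp only [Hrow p hpa hpb, Ne.symm hpa, Ne.symm hpb, if_false, eq_self_iff_true,
              if_true, zero_mul, add_zero, zero_add, mul_zero, ite_self, Matrix.one_apply_ne hpa]
          · by_cases hqb : q = b
            · rw [hqb]
              simp only [Hrow p hpa hpb, Ne.symm hpa, Ne.symm hpb, if_false, eq_self_iff_true,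
                if_true, zero_mul, add_zero, zero_add, mul_zero, ite_self, Matrix.one_apply_ne hpb]
            · rw [if_neg hqa, if_neg hqb, Hrow p hpa hpb, Matrix.one_apply]
              by_cases hqp : q = p
              · rw [if_pos hqp, if_pos hqp.symm]
              · rw [if_neg hqp, if_neg (fun h => hqp h.symm)]
    have htri : ∀ i j : Fin n, j < i → (Gᴴ * T * G) i j = 0 := by
      intro i j hji
      have hji' : (j : ℕ) < (i : ℕ) := hji
      by_cases hja : j = a
      · have hjav : (j : ℕ) = (a : ℕ) := by rw [hja]
        rw [hja]
        by_cases hib : i = b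
        · rw [hib]; exact Fba
        · have hb' := Fin.val_ne_of_ne hib
          have hia : i ≠ a := by
            intro h
            have := congrArg Fin.val h
            omega
          rw [Fia i hia hib]
          rw [hT i a (by rw [Fin.lt_def]; omega), hT i b (by rw [Fin.lt_def]; omega)]
          ring
      · by_cases hjb : j = b
        · have hjbv : (j : ℕ) = (b : ℕ) := by rw [hjb]
          rw [hjb]
          have hib : i ≠ b := by
            intro h
            have := congrArg Fin.val h
            omega
          have hia : i ≠ a := by
            intro h
            have := congrArg Fin.val h
            omega
          rw [Fib i hia hib]
          rw [hT i a (by rw [Fin.lt_def]; omega), hT i b (by rw [Fin.lt_def]; omega)]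
          ring
        · have ha' := Fin.val_ne_of_ne hja
          have hb' := Fin.val_ne_of_ne hjb
          by_cases hia : i = a
          · have hiav : (i : ℕ) = (a : ℕ) := by rw [hia]
            rw [hia]
            rw [Faj j hja hjb]
            rw [hT a j (by rw [Fin.lt_def]; omega), hT b j (by rw [Fin.lt_def]; omega)]
            ring
          · by_cases hib : i = b
            · have hibv : (i : ℕ) = (b : ℕ) := by rw [hib]
              rw [hib]
              rw [Fbj j hja hjb]
              rw [hT a j (by rw [Fin.lt_def]; omega), hT b j (by rw [Fin.lt_def]; omega)]
              ring
            · rw [Fout i j hia hib hja hjb]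
              exact hT i j hji
    have hdiag : ∀ i, (Gᴴ * T * G) i i = T (Equiv.swap a b i) (Equiv.swap a b i) := by
      intro i
      by_cases hia : i = a
      · rw [hia, Equiv.swap_apply_left, Faa]
      · by_cases hib : i = b
        · rw [hib, Equiv.swap_apply_right, Fbb]
        · rw [Equiv.swap_apply_of_ne_of_ne hia hib, Fout i i hia hib hia hib]
    refine ⟨G, hunit, htri, hdiag, ?_⟩
    intro i j
    constructor
    · intro h
      exact (blockEquiv_congr_swap hTedge i j).mp (blockEquiv_mono dir1 i j h)
    · intro h
      exact blockEquiv_mono dir2 i j ((blockEquiv_congr_swap hTedge i j).mpr h)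

def Good (σ : Equiv.Perm (Fin n)) : Prop :=
  ∀ T : Matrix (Fin n) (Fin n) ℂ, (∀ i j : Fin n, j < i → T i j = 0) →
    ∃ V : Matrix (Fin n) (Fin n) ℂ,
      Vᴴ * V = 1 ∧
      (∀ i j : Fin n, j < i → (Vᴴ * T * V) i j = 0) ∧
      (∀ i : Fin n, (Vᴴ * T * V) i i = T (σ i) (σ i)) ∧
      (∀ i j : Fin n, BlockEquiv (Vᴴ * T * V) i j ↔ BlockEquiv T (σ i) (σ j))

lemma good_one : Good (1 : Equiv.Perm (Fin n)) := by
  intro T hT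
  refine ⟨1, by simp, ?_, ?_, ?_⟩
  · intro i j h
    simpa using hT i j h
  · intro i
    simp
  · intro i j
    simp

lemma good_mul {σ₁ σ₂ : Equiv.Perm (Fin n)} (h1 : Good σ₁) (h2 : Good σ₂) :
    Good (σ₁ * σ₂) := by
  intro T hT
  obtain ⟨V₁, hu1, ht1, hd1, hb1⟩ := h1 T hT
  obtain ⟨V₂, hu2, ht2, hd2, hb2⟩ := h2 (V₁ᴴ * T * V₁) ht1
  have hassoc : (V₁ * V₂)ᴴ * T * (V₁ * V₂) = V₂ᴴ * (V₁ᴴ * T * V₁) * V₂ := by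
    rw [Matrix.conjTranspose_mul]
    simp only [Matrix.mul_assoc]
  refine ⟨V₁ * V₂, ?_, ?_, ?_, ?_⟩
  · rw [Matrix.conjTranspose_mul,
      show V₂ᴴ * V₁ᴴ * (V₁ * V₂) = V₂ᴴ * ((V₁ᴴ * V₁) * V₂) by simp only [Matrix.mul_assoc],
      hu1, Matrix.one_mul, hu2]
  · intro i j h
    rw [hassoc]
    exact ht2 i j h
  · intro i
    rw [hassoc, hd2, hd1, Equiv.Perm.mul_apply]
  · intro i j
    rw [hassoc]
    simp only [Equiv.Perm.mul_apply]
    exact (hb2 i j).trans (hb1 _ _)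

lemma good_swap_adj {a b : Fin n} (h : (a : ℕ) + 1 = (b : ℕ)) : Good (Equiv.swap a b) :=
  fun T hT => adjacent_swap T hT h

lemma good_swap_key : ∀ d : ℕ, ∀ x y : Fin n, (y : ℕ) = (x : ℕ) + d →
    Good (Equiv.swap x y) := by
  intro d
  induction d using Nat.strong_induction_on with
  | _ d ih =>
    intro x y hxy
    rcases d with _ | _ | k
    · have hx : x = y := Fin.ext (by omega)
      rw [hx, Equiv.swap_self]
      exact good_one
    · exact good_swap_adj (by omega)
    · have hyn : (y : ℕ) < n := y.isLt
      have hzlt : (x : ℕ) + (k + 1) < n := by omega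
      set z : Fin n := ⟨(x : ℕ) + (k + 1), hzlt⟩ with hzdef
      have hzv : (z : ℕ) = (x : ℕ) + (k + 1) := rfl
      have hxz : x ≠ z := by
        intro h
        have := congrArg Fin.val h
        omega
      have hxy' : x ≠ y := by
        intro h
        have := congrArg Fin.val h
        omega
      have e : Equiv.swap z y * Equiv.swap x z * Equiv.swap z y = Equiv.swap y x :=
        Equiv.swap_mul_swap_mul_swap hxz hxy'
      have g1 : Good (Equiv.swap z y) := good_swap_adj (by omega)
      have g2 : Good (Equiv.swap x z) := ih (k + 1) (by omega) x z (by omega)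
      have hall := good_mul (good_mul g1 g2) g1
      rw [e, Equiv.swap_comm] at hall
      exact hall

lemma good_swap (x y : Fin n) : Good (Equiv.swap x y) := by
  rcases le_or_gt (x : ℕ) (y : ℕ) with hle | hlt
  · exact good_swap_key ((y : ℕ) - x) x y (by omega)
  · rw [Equiv.swap_comm]
    exact good_swap_key ((x : ℕ) - y) y x (by omega)

lemma good_all (σ : Equiv.Perm (Fin n)) : Good σ :=
  Equiv.Perm.swap_induction_on σ good_one
    (fun _ x y _ hf => good_mul (good_swap x y) hf)

end SchurAux

/-- For any upper triangular `S` and any permutation `σ`, there is a unitary `V` such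
that `Vᴴ S V` is upper triangular with diagonal `α_{σ(i)}` and block equivalence is
transported by `σ`. -/
theorem exists_unitary_permuting_schur_diagonal
    {n : ℕ} (hn : 1 ≤ n) (S : Matrix (Fin n) (Fin n) ℂ)
    (hS : ∀ i j : Fin n, j < i → S i j = 0) (σ : Equiv.Perm (Fin n)) :
    ∃ V : Matrix (Fin n) (Fin n) ℂ,
      Vᴴ * V = 1 ∧
      (∀ i j : Fin n, j < i → (Vᴴ * S * V) i j = 0) ∧
      (∀ i : Fin n, (Vᴴ * S * V) i i = S (σ i) (σ i)) ∧
      (∀ i j : Fin n, BlockEquiv (Vᴴ * S * V) i j ↔ BlockEquiv S (σ i) (σ j)) := by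
  exact SchurAux.good_all σ S hS
end

section
/- Let n ≥ 1 and let S ∈ ℂ^{n×n} be upper triangular. Then there exist a unitary matrix U ∈ ℂ^{n×n} and a permutation σ of {1,…,n} such that T = UᴴSU is upper triangular with T_{ii} = S_{σ(i)σ(i)} for all i, block equivalence is preserved (i and j are block equivalent with respect to T if and only if σ(i) and σ(j) are block equivalent with respect to S), each block-equivalence class of T is an interval of indices (if i ≤ j ≤ k and i is block equivalent to k with respect to T, then i is block equivalent to j with respect to T), and T_{ij} = 0 whenever i and j are not block equivalent with respect to T; that is, T is block diagonal with upper triangular diagonal blocks whose index sets are exactly the block-equivalence classes. -/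
open Matrix

/-!
Conjugating by a permutation matrix reorders the indices, so `UᴴSU = S.submatrix σ σ`, and block
equivalence is transported along `σ`. Choose `σ` that sorts the indices lexicographically by
(block-equivalence class, index): every class then occupies an interval, and within a class the
order of the indices is kept, so entries below the diagonal inside a block come from entries below
the diagonal of `S`, while entries between different classes vanish anyway.
-/

theorem Relation.EqvGen.lift {α β : Type*} {r : α → α → Prop} {p : β → β → Prop} (f : α → β)
    (h : ∀ x y, r x y → p (f x) (f y)) {a b : α} (hab : EqvGen r a b) : EqvGen p (f a) (f b) := by
  induction hab with
  | rel x y hxy => exact .rel _ _ (h x y hxy)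
  | refl x => exact .refl _
  | symm x y _ ih => exact .symm _ _ ih
  | trans x y z _ _ ihxy ihyz => exact .trans _ _ _ ihxy ihyz

theorem Tuple.exists_perm_monotone_comp_and_strictMono_on_fibres {n : ℕ} {α : Type*}
    [LinearOrder α] (c : Fin n → α) :
    ∃ σ : Equiv.Perm (Fin n), Monotone (c ∘ σ) ∧
      ∀ i j, i < j → c (σ i) = c (σ j) → σ i < σ j := by
  let key : Fin n → α ×ₗ Fin n := fun a => toLex (c a, a)
  have key_injective : Function.Injective key := fun a b hab => congrArg Prod.snd hab
  let σ := Tuple.sort key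
  have key_strictMono : StrictMono (key ∘ σ) :=
    (Tuple.monotone_sort key).strictMono_of_injective (key_injective.comp σ.injective)
  refine ⟨σ, fun i j hij => Prod.Lex.monotone_fst _ _ (Tuple.monotone_sort key hij),
    fun i j hij hc => ?_⟩
  rcases Prod.Lex.lt_iff.mp (key_strictMono hij) with hlt | ⟨_, hlt⟩
  · exact absurd hc hlt.ne
  · exact hlt

theorem Equivalence.exists_perm_classes_ordConnected {n : ℕ} {r : Fin n → Fin n → Prop}
    (hr : Equivalence r) :
    ∃ σ : Equiv.Perm (Fin n), (∀ i j, i < j → r (σ i) (σ j) → σ i < σ j) ∧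
      ∀ i j k, i ≤ j → j ≤ k → r (σ i) (σ k) → r (σ i) (σ j) := by
  let s : Setoid (Fin n) := ⟨r, hr⟩
  have rep_eq_iff (a b : Fin n) : (⟦a⟧ : Quotient s).out = (⟦b⟧ : Quotient s).out ↔ r a b :=
    Quotient.out_inj.trans Quotient.eq
  obtain ⟨σ, hmono, hfibre⟩ :=
    Tuple.exists_perm_monotone_comp_and_strictMono_on_fibres fun a => (⟦a⟧ : Quotient s).out
  refine ⟨σ, fun i j hij hrij => hfibre i j hij ((rep_eq_iff _ _).mpr hrij),
    fun i j k hij hjk hik => ?_⟩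
  rw [← rep_eq_iff] at hik ⊢
  exact le_antisymm (hmono hij) (hik ▸ hmono hjk)

namespace Matrix

variable {m R : Type*} [Fintype m] [DecidableEq m] [NonAssocSemiring R] [StarRing R]

theorem conjTranspose_permMatrix_mul_self (σ : Equiv.Perm m) :
    (σ.permMatrix R)ᴴ * σ.permMatrix R = 1 := by
  rw [conjTranspose_permMatrix, ← permMatrix_mul, mul_inv_cancel, permMatrix_one]

theorem conjTranspose_permMatrix_inv_mul_mul (σ : Equiv.Perm m) (A : Matrix m m R) :
    ((σ⁻¹).permMatrix R)ᴴ * A * (σ⁻¹).permMatrix R = A.submatrix σ σ := by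
  rw [conjTranspose_permMatrix, inv_inv, Equiv.Perm.permMatrix, Equiv.Perm.permMatrix,
    PEquiv.toMatrix_toPEquiv_mul, PEquiv.mul_toMatrix_toPEquiv, submatrix_submatrix]
  rfl

end Matrix

theorem directlyRelated_submatrix_iff {m n : ℕ} (S : Matrix (Fin n) (Fin n) ℂ)
    {f : Fin m → Fin n} (hf : Function.Injective f) (i j : Fin m) :
    DirectlyRelated (S.submatrix f f) i j ↔ DirectlyRelated S (f i) (f j) := by
  simp only [DirectlyRelated, submatrix_apply, hf.ne_iff]

theorem blockEquiv_submatrix_iff {n : ℕ} (S : Matrix (Fin n) (Fin n) ℂ)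
    (σ : Equiv.Perm (Fin n)) (i j : Fin n) :
    BlockEquiv (S.submatrix σ σ) i j ↔ BlockEquiv S (σ i) (σ j) := by
  refine ⟨Relation.EqvGen.lift σ fun a b => (directlyRelated_submatrix_iff S σ.injective a b).mp,
    fun h => ?_⟩
  have h' := Relation.EqvGen.lift σ.symm (fun a b hab =>
    (directlyRelated_submatrix_iff S σ.injective _ _).mpr (by simpa using hab)) h
  rwa [σ.symm_apply_apply, σ.symm_apply_apply] at h'

theorem apply_eq_zero_of_not_blockEquiv {n : ℕ} {T : Matrix (Fin n) (Fin n) ℂ} {i j : Fin n}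
    (h : ¬ BlockEquiv T i j) : T i j = 0 := by
  by_contra hT
  have hij : i ≠ j := by rintro rfl; exact h (.refl i)
  exact h (.rel i j ⟨hij, .inl hT⟩)

theorem exists_unitary_block_diagonalisation_general
    {n : ℕ} (S : Matrix (Fin n) (Fin n) ℂ)
    (hS : ∀ i j : Fin n, j < i → S i j = 0) :
    ∃ (U : Matrix (Fin n) (Fin n) ℂ) (σ : Equiv.Perm (Fin n)),
      Uᴴ * U = 1 ∧
      (∀ i j : Fin n, j < i → (Uᴴ * S * U) i j = 0) ∧
      (∀ i : Fin n, (Uᴴ * S * U) i i = S (σ i) (σ i)) ∧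
      (∀ i j : Fin n, BlockEquiv (Uᴴ * S * U) i j ↔ BlockEquiv S (σ i) (σ j)) ∧
      (∀ i j k : Fin n, i ≤ j → j ≤ k →
        BlockEquiv (Uᴴ * S * U) i k → BlockEquiv (Uᴴ * S * U) i j) ∧
      (∀ i j : Fin n, ¬ BlockEquiv (Uᴴ * S * U) i j → (Uᴴ * S * U) i j = 0) := by
  obtain ⟨σ, hσ_lt, hσ_ordConnected⟩ :=
    (Relation.EqvGen.is_equivalence (DirectlyRelated S)).exists_perm_classes_ordConnected
  have hT : ((σ⁻¹).permMatrix ℂ)ᴴ * S * (σ⁻¹).permMatrix ℂ = S.submatrix σ σ :=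
    conjTranspose_permMatrix_inv_mul_mul σ S
  refine ⟨(σ⁻¹).permMatrix ℂ, σ, conjTranspose_permMatrix_mul_self _, ?_, fun i => by rw [hT]; rfl,
    by rw [hT]; exact blockEquiv_submatrix_iff S σ, ?_, ?_⟩
  · intro i j hji
    rw [hT, submatrix_apply]
    by_cases hblock : BlockEquiv S (σ i) (σ j)
    · exact hS _ _ (hσ_lt j i hji hblock.symm)
    · exact apply_eq_zero_of_not_blockEquiv hblock
  · simp only [hT, blockEquiv_submatrix_iff]
    exact hσ_ordConnected
  · rw [hT]
    exact fun i j => apply_eq_zero_of_not_blockEquiv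

/-- Any upper triangular matrix is unitarily similar to a block diagonal upper
triangular matrix whose diagonal blocks correspond exactly to the block-equivalence
classes: the diagonal is permuted by some `σ`, block equivalence is preserved,
each block-equivalence class is an interval of indices, and entries between
inequivalent indices vanish. -/
theorem exists_unitary_block_diagonalisation
    {n : ℕ} (hn : 1 ≤ n) (S : Matrix (Fin n) (Fin n) ℂ)
    (hS : ∀ i j : Fin n, j < i → S i j = 0) :
    ∃ (U : Matrix (Fin n) (Fin n) ℂ) (σ : Equiv.Perm (Fin n)),
      Uᴴ * U = 1 ∧
      (∀ i j : Fin n, j < i → (Uᴴ * S * U) i j = 0) ∧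
      (∀ i : Fin n, (Uᴴ * S * U) i i = S (σ i) (σ i)) ∧
      (∀ i j : Fin n, BlockEquiv (Uᴴ * S * U) i j ↔ BlockEquiv S (σ i) (σ j)) ∧
      (∀ i j k : Fin n, i ≤ j → j ≤ k →
        BlockEquiv (Uᴴ * S * U) i k → BlockEquiv (Uᴴ * S * U) i j) ∧
      (∀ i j : Fin n, ¬ BlockEquiv (Uᴴ * S * U) i j → (Uᴴ * S * U) i j = 0) :=
  exists_unitary_block_diagonalisation_general S hS
end

section
/- Let n ≥ 1 and let A ∈ ℂ^{n×n} have n pairwise distinct eigenvalues. Suppose A = U₁S₁U₁ᴴ = U₂S₂U₂ᴴ are two Schur factorisations of A, i.e., U₁, U₂ are unitary and S₁, S₂ are upper triangular (in particular the diagonal entries of S₁ are pairwise distinct and form the same set as those of S₂, namely the spectrum of A). Then for all complex numbers μ, ν: there exist indices i, j with (S₁)_{ii} = μ, (S₁)_{jj} = ν and i block equivalent to j with respect to S₁, if and only if there exist indices i, j with (S₂)_{ii} = μ, (S₂)_{jj} = ν and i block equivalent to j with respect to S₂. In other words, the partition of the spectrum of A into block-equivalence classes is independent of the chosen Schur factorisation.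 -/
open Matrix

/-!
For an upper triangular `S` with distinct diagonal entries, every matrix commuting with `S` is a
polynomial in `S` (interpolate its diagonal at the diagonal of `S`). A self-adjoint polynomial in
`S` is upper triangular and self-adjoint, hence diagonal, and a diagonal matrix commutes with `S`
exactly when its diagonal is constant on block-equivalence classes. So `i` and `j` are block
equivalent iff `q (S i i) = q (S j j)` for every polynomial `q` with `q(S)` self-adjoint. Unitary
conjugation preserves both this condition and the characteristic polynomial, whose roots are the
diagonal entries of `S`, so the partition of the spectrum is determined by `A` alone.
-/

open Polynomial

theorem Polynomial.commute_aeval_self {R A : Type*} [CommSemiring R] [Semiring A] [Algebra R A]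
    (x : A) (q : R[X]) : Commute (aeval x q) x := by
  simpa using (Commute.all q X).map (aeval x)

theorem isSelfAdjoint_aeval_unitary_conj_iff {R A : Type*} [CommSemiring R] [Ring A] [StarRing A]
    [Algebra R A] {u : A} (hu : u ∈ unitary A) (x : A) (q : R[X]) :
    IsSelfAdjoint (aeval (u * x * star u) q) ↔ IsSelfAdjoint (aeval x q) := by
  rw [show aeval (u * x * star u) q = u * aeval x q * star u from
    aeval_algHom_apply (Unitary.conjStarAlgAut R A ⟨u, hu⟩) x q]
  exact (Unitary.isUnit_coe (U := ⟨u, hu⟩)).isSelfAdjoint_conjugate_iff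

namespace Matrix

variable {ι K : Type*}

theorem charpoly_unitary_conj [Fintype ι] [DecidableEq ι] [CommRing K] [StarRing K]
    {U : Matrix ι ι K} (hU : U ∈ unitary (Matrix ι ι K)) (S : Matrix ι ι K) :
    (U * S * Uᴴ).charpoly = S.charpoly := by
  rw [charpoly_mul_comm, ← mul_assoc, ← star_eq_conjTranspose, Unitary.star_mul_self_of_mem hU,
    one_mul]

theorem commute_diagonal_iff [Fintype ι] [DecidableEq ι] [CommRing K] [NoZeroDivisors K]
    {d : ι → K} {S : Matrix ι ι K} :
    Commute (diagonal d) S ↔ ∀ i j, S i j ≠ 0 → d i = d j := by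
  simp only [Commute, SemiconjBy, ← ext_iff, diagonal_mul, mul_diagonal, mul_comm (S _ _)]
  refine forall₂_congr fun i j => ?_
  rw [mul_eq_mul_right_iff]
  tauto

section UpperTriangular

variable [LinearOrder ι]

theorem IsUpperTriangular.isDiag_of_isSelfAdjoint [Ring K] [StarRing K] {H : Matrix ι ι K}
    (hH : H.IsUpperTriangular) (hsa : IsSelfAdjoint H) : H.IsDiag := by
  intro i j hij
  rcases hij.lt_or_gt with h | h
  · rw [← hsa.star_eq, star_apply, hH h, star_zero]
  · exact hH h

variable [Fintype ι]

theorem IsUpperTriangular.mul_apply_self [CommRing K] {M N : Matrix ι ι K}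
    (hM : M.IsUpperTriangular) (hN : N.IsUpperTriangular) (i : ι) :
    (M * N) i i = M i i * N i i := by
  rw [mul_apply, Finset.sum_eq_single i]
  · intro k _ hki
    rcases hki.lt_or_gt with hk | hk
    · rw [hM hk, zero_mul]
    · rw [hN hk, mul_zero]
  · simp

theorem IsUpperTriangular.eq_zero_of_commute [CommRing K] [IsDomain K] {S M : Matrix ι ι K}
    (hS : S.IsUpperTriangular) (hd : Function.Injective fun i => S i i) (hc : Commute M S)
    (h0 : ∀ i, M i i = 0) : M = 0 := by
  -- Comparing the `(i, j)` entries of `M * S` and `S * M` gives `M i j * (S j j - S i i) = 0`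
  -- once the entries of `M` left of `(i, j)` in row `i` and below it in column `j` vanish.
  ext i j
  induction j using WellFoundedLT.induction generalizing i with
  | _ j ihj =>
  induction i using WellFoundedGT.induction with
  | _ i ihi =>
  have hMS : (M * S) i j = M i j * S j j := by
    rw [mul_apply, Finset.sum_eq_single j]
    · intro k _ hkj
      rcases hkj.lt_or_gt with hk | hk
      · rw [ihj k hk i, zero_apply, zero_mul]
      · rw [hS hk, mul_zero]
    · simp
  have hSM : (S * M) i j = S i i * M i j := by
    rw [mul_apply, Finset.sum_eq_single i]
    · intro k _ hki
      rcases hki.lt_or_gt with hk | hk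
      · rw [hS hk, zero_mul]
      · rw [ihi k hk, zero_apply, mul_zero]
    · simp
  rcases eq_or_ne i j with rfl | hij
  · exact h0 i
  have hprod : M i j * (S j j - S i i) = 0 := by
    rw [mul_sub, ← hMS, mul_comm, ← hSM, hc.eq, sub_self]
  simpa [sub_eq_zero, hd.ne hij.symm] using hprod

variable [DecidableEq ι]

theorem isUpperTriangular_aeval [CommRing K] {S : Matrix ι ι K} (hS : S.IsUpperTriangular)
    (q : K[X]) : (aeval S q).IsUpperTriangular :=
  Algebra.adjoin_le (R := K) (S := blockTriangularSubalgebra K K id)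
    (Set.singleton_subset_iff.2 hS) (Polynomial.aeval_mem_adjoin_singleton K S)

theorem IsUpperTriangular.aeval_apply_self [CommRing K] {S : Matrix ι ι K}
    (hS : S.IsUpperTriangular) (q : K[X]) (i : ι) : aeval S q i i = q.eval (S i i) := by
  induction q using Polynomial.recOnHorner with
  | M0 => simp
  | MC p a _ _ ih => simp [ih, algebraMap_eq_diagonal]
  | MX p _ ih => rw [map_mul, aeval_X, (isUpperTriangular_aeval hS p).mul_apply_self hS, ih,
      eval_mul_X]

theorem IsUpperTriangular.roots_charpoly [CommRing K] [IsDomain K] {S : Matrix ι ι K}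
    (hS : S.IsUpperTriangular) : S.charpoly.roots = Finset.univ.val.map fun i => S i i := by
  rw [charpoly_of_isUpperTriangular S hS, ← roots_multiset_prod_X_sub_C (Finset.univ.val.map _),
    Multiset.map_map]
  rfl

theorem IsUpperTriangular.injective_diag_iff_nodup_roots [CommRing K] [IsDomain K]
    {S : Matrix ι ι K} (hS : S.IsUpperTriangular) :
    Function.Injective (fun i => S i i) ↔ S.charpoly.roots.Nodup := by
  rw [hS.roots_charpoly, Finset.nodup_map_iff_injOn, Finset.coe_univ, Set.injOn_univ]

theorem IsUpperTriangular.exists_aeval_eq_of_commute [Field K] {S M : Matrix ι ι K}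
    (hS : S.IsUpperTriangular) (hd : Function.Injective fun i => S i i) (hc : Commute M S) :
    ∃ q : K[X], aeval S q = M := by
  let q := Lagrange.interpolate Finset.univ (fun i => S i i) fun i => M i i
  refine ⟨q, (sub_eq_zero.1 (hS.eq_zero_of_commute hd (hc.sub_left (commute_aeval_self S q))
    fun i => ?_)).symm⟩
  rw [sub_apply, hS.aeval_apply_self,
    Lagrange.eval_interpolate_at_node _ hd.injOn (Finset.mem_univ i), sub_self]

end UpperTriangular

end Matrix

section BlockEquiv

variable {n : ℕ} {S : Matrix (Fin n) (Fin n) ℂ}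

theorem blockEquiv_equivalence (S : Matrix (Fin n) (Fin n) ℂ) : Equivalence (BlockEquiv S) :=
  Relation.EqvGen.is_equivalence _

theorem commute_diagonal_iff_forall_blockEquiv {d : Fin n → ℂ} :
    Commute (diagonal d) S ↔ ∀ i j, BlockEquiv S i j → d i = d j := by
  rw [commute_diagonal_iff]
  refine ⟨fun h i j hij => ?_, fun h i j hSij => ?_⟩
  · induction hij with
    | rel k l hkl =>
      obtain ⟨-, hkl | hlk⟩ := hkl
      exacts [h k l hkl, (h l k hlk).symm]
    | refl => rfl
    | symm _ _ _ ih => exact ih.symm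
    | trans _ _ _ _ _ ih₁ ih₂ => exact ih₁.trans ih₂
  · rcases eq_or_ne i j with rfl | hij
    · rfl
    · exact h i j (.rel i j ⟨hij, .inl hSij⟩)

theorem BlockEquiv.eval_eq_of_isSelfAdjoint_aeval (hS : S.IsUpperTriangular) {i j : Fin n}
    (h : BlockEquiv S i j) {q : ℂ[X]} (hq : IsSelfAdjoint (aeval S q)) :
    q.eval (S i i) = q.eval (S j j) := by
  have hdiag := (isUpperTriangular_aeval hS q).isDiag_of_isSelfAdjoint hq
  have hc : Commute (diagonal (aeval S q).diag) S := by
    rw [hdiag.diagonal_diag]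
    exact commute_aeval_self S q
  rw [← hS.aeval_apply_self, ← hS.aeval_apply_self]
  exact commute_diagonal_iff_forall_blockEquiv.1 hc i j h

theorem blockEquiv_of_forall_isSelfAdjoint_aeval (hS : S.IsUpperTriangular)
    (hd : Function.Injective fun i => S i i) {i j : Fin n}
    (h : ∀ q : ℂ[X], IsSelfAdjoint (aeval S q) → q.eval (S i i) = q.eval (S j j)) :
    BlockEquiv S i j := by
  classical
  let d : Fin n → ℂ := fun k => if BlockEquiv S i k then 1 else 0
  have hc : Commute (diagonal d) S := commute_diagonal_iff_forall_blockEquiv.2 fun k l hkl => by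
    have hiff : BlockEquiv S i k ↔ BlockEquiv S i l :=
      ⟨fun h => (blockEquiv_equivalence S).trans h hkl,
        fun h => (blockEquiv_equivalence S).trans h ((blockEquiv_equivalence S).symm hkl)⟩
    simp only [d, hiff]
  obtain ⟨q, hq⟩ := hS.exists_aeval_eq_of_commute hd hc
  have hsa : IsSelfAdjoint (aeval S q) := by
    rw [hq, ← isHermitian_iff_isSelfAdjoint, isHermitian_diagonal_iff]
    intro k
    by_cases hk : BlockEquiv S i k <;> simp [d, hk]
  have hdij := h q hsa
  rw [← hS.aeval_apply_self, ← hS.aeval_apply_self, hq, diagonal_apply_eq,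
    diagonal_apply_eq] at hdij
  by_contra hij
  simp [d, hij, (blockEquiv_equivalence S).refl i] at hdij

theorem blockEquiv_iff_forall_isSelfAdjoint_aeval (hS : S.IsUpperTriangular)
    (hd : Function.Injective fun i => S i i) {i j : Fin n} :
    BlockEquiv S i j ↔
      ∀ q : ℂ[X], IsSelfAdjoint (aeval S q) → q.eval (S i i) = q.eval (S j j) :=
  ⟨fun h _ hq => h.eval_eq_of_isSelfAdjoint_aeval hS hq,
    blockEquiv_of_forall_isSelfAdjoint_aeval hS hd⟩

theorem exists_blockEquiv_iff_of_unitary_conj {A U : Matrix (Fin n) (Fin n) ℂ}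
    (hU : U ∈ unitary (Matrix (Fin n) (Fin n) ℂ)) (hS : S.IsUpperTriangular)
    (hd : Function.Injective fun i => S i i) (hA : A = U * S * Uᴴ) (μ ν : ℂ) :
    (∃ i j, S i i = μ ∧ S j j = ν ∧ BlockEquiv S i j) ↔
      μ ∈ A.charpoly.roots ∧ ν ∈ A.charpoly.roots ∧
        ∀ q : ℂ[X], IsSelfAdjoint (aeval A q) → q.eval μ = q.eval ν := by
  subst hA
  rw [charpoly_unitary_conj hU, hS.roots_charpoly, ← star_eq_conjTranspose]
  simp only [isSelfAdjoint_aeval_unitary_conj_iff hU, Multiset.mem_map, Finset.mem_univ_val,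
    true_and]
  constructor
  · rintro ⟨i, j, rfl, rfl, h⟩
    exact ⟨⟨i, rfl⟩, ⟨j, rfl⟩, (blockEquiv_iff_forall_isSelfAdjoint_aeval hS hd).1 h⟩
  · rintro ⟨⟨i, rfl⟩, ⟨j, rfl⟩, h⟩
    exact ⟨i, j, rfl, rfl, (blockEquiv_iff_forall_isSelfAdjoint_aeval hS hd).2 h⟩

end BlockEquiv

theorem blockEquiv_classes_independent_of_schur_factorisation_general
    {n : ℕ} (A U₁ U₂ S₁ S₂ : Matrix (Fin n) (Fin n) ℂ)
    (hU₁ : U₁ᴴ * U₁ = 1) (hU₂ : U₂ᴴ * U₂ = 1)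
    (hS₁ : ∀ i j : Fin n, j < i → S₁ i j = 0)
    (hS₂ : ∀ i j : Fin n, j < i → S₂ i j = 0)
    (hA₁ : A = U₁ * S₁ * U₁ᴴ) (hA₂ : A = U₂ * S₂ * U₂ᴴ)
    (hdist : Function.Injective fun i : Fin n => S₁ i i) :
    ∀ μ ν : ℂ,
      (∃ i j : Fin n, S₁ i i = μ ∧ S₁ j j = ν ∧ BlockEquiv S₁ i j) ↔
      (∃ i j : Fin n, S₂ i i = μ ∧ S₂ j j = ν ∧ BlockEquiv S₂ i j) := by
  have hu₁ : U₁ ∈ unitary _ := mem_unitaryGroup_iff'.2 hU₁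
  have hu₂ : U₂ ∈ unitary _ := mem_unitaryGroup_iff'.2 hU₂
  have hT₁ : S₁.IsUpperTriangular := fun i j => hS₁ i j
  have hT₂ : S₂.IsUpperTriangular := fun i j => hS₂ i j
  have hdist₂ : Function.Injective fun i => S₂ i i := by
    rw [hT₂.injective_diag_iff_nodup_roots, ← charpoly_unitary_conj hu₂, ← hA₂, hA₁,
      charpoly_unitary_conj hu₁, ← hT₁.injective_diag_iff_nodup_roots]
    exact hdist
  intro μ ν
  rw [exists_blockEquiv_iff_of_unitary_conj hu₁ hT₁ hdist hA₁,
    exists_blockEquiv_iff_of_unitary_conj hu₂ hT₂ hdist₂ hA₂]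

/-- If `A` has `n` pairwise distinct eigenvalues (equivalently, the diagonal entries of
a Schur triangular factor are pairwise distinct), then the partition of the spectrum of
`A` into block-equivalence classes does not depend on the chosen Schur factorisation. -/
theorem blockEquiv_classes_independent_of_schur_factorisation
    {n : ℕ} (hn : 1 ≤ n) (A U₁ U₂ S₁ S₂ : Matrix (Fin n) (Fin n) ℂ)
    (hU₁ : U₁ᴴ * U₁ = 1) (hU₂ : U₂ᴴ * U₂ = 1)
    (hS₁ : ∀ i j : Fin n, j < i → S₁ i j = 0)
    (hS₂ : ∀ i j : Fin n, j < i → S₂ i j = 0)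
    (hA₁ : A = U₁ * S₁ * U₁ᴴ) (hA₂ : A = U₂ * S₂ * U₂ᴴ)
    (hdist : Function.Injective fun i : Fin n => S₁ i i) :
    ∀ μ ν : ℂ,
      (∃ i j : Fin n, S₁ i i = μ ∧ S₁ j j = ν ∧ BlockEquiv S₁ i j) ↔
      (∃ i j : Fin n, S₂ i i = μ ∧ S₂ j j = ν ∧ BlockEquiv S₂ i j) :=
  blockEquiv_classes_independent_of_schur_factorisation_general A U₁ U₂ S₁ S₂ hU₁ hU₂ hS₁ hS₂ hA₁
    hA₂ hdist
end

section
/- Let n ≥ 1 and let A ∈ ℂ^{n×n} be normal (AᴴA = AAᴴ). Then for every λ ∈ ℂ the smallest singular value of λI − A equals the distance from λ to the spectrum of A, i.e., s_n(λ) = min{|λ − μ| : μ an eigenvalue of A}; consequently, for every δ ≥ 0, Spec_δ(A) = {λ ∈ ℂ : there exists an eigenvalue μ of A with |λ − μ| ≤ δ}. -/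
open Matrix

/-!
For a normal element `a` of a C⋆-algebra the continuous functional calculus is isometric, so
`‖(z - a)⁻¹‖` is the reciprocal of the distance `d` from `z` to `σ(a)`. Hence if `‖e‖ < d`,
then `z - (a + e) = (z - a)(1 - (z - a)⁻¹ e)` is invertible by the Neumann series; conversely the
scalar perturbation `e = z - μ` moves the eigenvalue `μ` to `z`. For the smallest singular
value, `(z - a)⋆(z - a)` is `|z - ·|²` applied to `a`, so its spectrum is
`{|z - μ|² | μ ∈ σ(a)}`.
-/

theorem Real.sqrt_sInf {s : Set ℝ} (hs : BddBelow s) : √(sInf s) = sInf (Real.sqrt '' s) := by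
  rcases s.eq_empty_or_nonempty with rfl | hne
  · simp
  · exact Real.sqrt_monotone.map_csInf_of_continuousAt Real.continuous_sqrt.continuousAt hne hs

namespace IsStarNormal

variable {A : Type*} [CStarAlgebra A] (a : A) [IsStarNormal a]

theorem spectrum_star_mul_self :
    spectrum ℂ (star a * a) = (fun z : ℂ => ((‖z‖ ^ 2 : ℝ) : ℂ)) '' spectrum ℂ a := by
  have h : cfc (fun z : ℂ => star z * z) a = star a * a := by
    rw [cfc_mul (star ·) (fun z => z) a, cfc_star, cfc_id' ℂ a]
  rw [← h, cfc_map_spectrum (fun z : ℂ => star z * z) a]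
  congr! with z
  push_cast
  exact Complex.conj_mul' z

theorem cfc_const_sub_id (z : ℂ) : cfc (fun μ => z - μ) a = algebraMap ℂ A z - a := by
  rw [cfc_sub (fun _ => z) (fun μ => μ) a, cfc_const z a, cfc_id' ℂ a]

theorem norm_inverse_algebraMap_sub_le {z : ℂ} {d : ℝ} (hd : 0 < d)
    (h : ∀ μ ∈ spectrum ℂ a, d ≤ ‖z - μ‖) :
    ‖Ring.inverse (algebraMap ℂ A z - a)‖ ≤ d⁻¹ := by
  have hne : ∀ μ ∈ spectrum ℂ a, z - μ ≠ 0 := fun μ hμ =>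
    norm_pos_iff.mp (hd.trans_le (h μ hμ))
  rw [← cfc_const_sub_id, ← cfc_inv _ a hne]
  refine norm_cfc_le (inv_nonneg.mpr hd.le) fun μ hμ => ?_
  rw [norm_inv]
  exact inv_anti₀ hd (h μ hμ)

theorem exists_norm_sub_le_of_mem_spectrum_add {e : A} {z : ℂ}
    (hz : z ∈ spectrum ℂ (a + e)) : ∃ μ ∈ spectrum ℂ a, ‖z - μ‖ ≤ ‖e‖ := by
  by_contra! hfar
  obtain ⟨d, hed, hd⟩ := (spectrum.isCompact a).exists_forall_le' (by fun_prop) hfar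
  have hd0 : 0 < d := (norm_nonneg e).trans_lt hed
  have hu : IsUnit (algebraMap ℂ A z - a) := by
    refine spectrum.notMem_iff.mp fun hza => ?_
    simpa using hd0.trans_le (hd z hza)
  have hsmall : ‖Ring.inverse (algebraMap ℂ A z - a) * e‖ < 1 :=
    calc _ ≤ d⁻¹ * ‖e‖ := by
          grw [norm_mul_le, norm_inverse_algebraMap_sub_le a hd0 hd]
      _ < 1 := by rwa [inv_mul_lt_one₀ hd0]
  have hfactor : algebraMap ℂ A z - (a + e)
      = (algebraMap ℂ A z - a) * (1 - Ring.inverse (algebraMap ℂ A z - a) * e) := by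
    rw [mul_sub, mul_one, ← mul_assoc, Ring.mul_inverse_cancel _ hu, one_mul, sub_sub]
  exact spectrum.mem_iff.mp hz <|
    hfactor ▸ hu.mul (Units.oneSub _ hsmall).isUnit

theorem exists_norm_le_and_mem_spectrum_add_iff (z : ℂ) (δ : ℝ) :
    (∃ e : A, ‖e‖ ≤ δ ∧ z ∈ spectrum ℂ (a + e)) ↔ ∃ μ ∈ spectrum ℂ a, ‖z - μ‖ ≤ δ := by
  constructor
  · rintro ⟨e, he, hz⟩
    obtain ⟨μ, hμ, hzμ⟩ := exists_norm_sub_le_of_mem_spectrum_add a hz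
    exact ⟨μ, hμ, hzμ.trans he⟩
  · rintro ⟨μ, hμ, hzμ⟩
    obtain _ | _ := subsingleton_or_nontrivial A
    · simp [spectrum.of_subsingleton] at hμ
    refine ⟨algebraMap ℂ A (z - μ), by rwa [norm_algebraMap'], ?_⟩
    have := spectrum.add_mem_add_iff (s := z - μ) |>.mpr hμ
    rwa [add_sub_cancel, add_comm] at this

end IsStarNormal

open scoped Matrix.Norms.L2Operator

theorem Matrix.range_eigenvalues_conjTranspose_mul_self {n : Type*} [Fintype n] [DecidableEq n]
    (M : Matrix n n ℂ) [IsStarNormal M] :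
    Set.range (isHermitian_conjTranspose_mul_self M).eigenvalues
      = (fun z : ℂ => ‖z‖ ^ 2) '' spectrum ℂ M := by
  ext r
  rw [← IsHermitian.spectrum_real_eq_range_eigenvalues, ← spectrum.algebraMap_mem_iff ℂ,
    ← star_eq_conjTranspose, IsStarNormal.spectrum_star_mul_self]
  simp only [Set.mem_image, Complex.coe_algebraMap, Complex.ofReal_inj]

theorem sMin_eq_sInf_norm_sub {n : ℕ} (A : Matrix (Fin n) (Fin n) ℂ) [IsStarNormal A] (lam : ℂ) :
    sMin A lam = sInf ((fun μ => ‖lam - μ‖) '' spectrum ℂ A) := by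
  have hM : lam • (1 : Matrix (Fin n) (Fin n) ℂ) - A = cfc (fun μ => lam - μ) A := by
    rw [IsStarNormal.cfc_const_sub_id, Algebra.algebraMap_eq_smul_one]
  have : IsStarNormal (lam • (1 : Matrix (Fin n) (Fin n) ℂ) - A) := hM ▸ cfc_predicate _ A
  rw [sMin, iInf, Matrix.range_eigenvalues_conjTranspose_mul_self, Real.sqrt_sInf,
    Set.image_image, hM, cfc_map_spectrum (fun μ => lam - μ) A, Set.image_image]
  · simp
  · exact ⟨0, by rintro _ ⟨z, -, rfl⟩; positivity⟩

theorem normal_sMin_eq_dist_spectrum_general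
    {n : ℕ} (A : Matrix (Fin n) (Fin n) ℂ)
    (hA : Aᴴ * A = A * Aᴴ) :
    (∀ lam : ℂ,
      sMin A lam = sInf ((fun μ => ‖lam - μ‖) '' spectrum ℂ A)) ∧
    (∀ δ : ℝ, 0 ≤ δ →
      pseudospectrum δ A =
        {lam : ℂ | ∃ μ ∈ spectrum ℂ A, ‖lam - μ‖ ≤ δ}) := by
  have : IsStarNormal A := ⟨hA⟩
  refine ⟨sMin_eq_sInf_norm_sub A, fun δ _ => ?_⟩
  ext lam
  simpa [pseudospectrum, l2OpNorm, ← cstar_norm_def] using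
    IsStarNormal.exists_norm_le_and_mem_spectrum_add_iff A lam δ

/-- For a normal matrix `A`, the smallest singular value of `λI - A` equals the
distance from `λ` to the spectrum of `A`; consequently, for every `δ ≥ 0` the
δ-pseudospectrum is the union of the closed δ-disks around the eigenvalues. -/
theorem normal_sMin_eq_dist_spectrum
    {n : ℕ} (hn : 1 ≤ n) (A : Matrix (Fin n) (Fin n) ℂ)
    (hA : Aᴴ * A = A * Aᴴ) :
    (∀ lam : ℂ,
      sMin A lam = sInf ((fun μ => ‖lam - μ‖) '' spectrum ℂ A)) ∧
    (∀ δ : ℝ, 0 ≤ δ →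
      pseudospectrum δ A =
        {lam : ℂ | ∃ μ ∈ spectrum ℂ A, ‖lam - μ‖ ≤ δ}) :=
  normal_sMin_eq_dist_spectrum_general A hA
end

section
/- Let H ∈ ℂ^{3×3} be the Hermitian matrix in block form H = [[H₁, v], [vᴴ, h]], where H₁ ∈ ℂ^{2×2} is Hermitian with two distinct eigenvalues, v ∈ ℂ², and h ∈ ℝ. Suppose σ ∈ ℝ is an eigenvalue of H of multiplicity at least 2 that is the smallest eigenvalue of H (i.e., the two smallest of the three eigenvalues of H, counted with multiplicity, both equal σ). Then σ is the smallest eigenvalue of H₁, and every eigenvector e ∈ ℂ² of H₁ with H₁e = σe is orthogonal to v (i.e., vᴴe = 0). -/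
/-!
Since `σ` is the least eigenvalue of `H`, the matrix `H - σ` is positive semidefinite, hence so is
its principal block `H₁ - σ`: every eigenvalue of `H₁` is at least `σ`. As `σ` is a repeated
eigenvalue of `H`, its eigenspace meets the hyperplane of vectors with vanishing last coordinate:
some `(e₀, 0) ≠ 0` satisfies `H (e₀, 0) = σ (e₀, 0)`, which blockwise reads `H₁ e₀ = σ e₀` and
`vᴴ e₀ = 0`. So `σ` is an eigenvalue, hence the least one, of `H₁`, and since the eigenvalues of
`H₁` are simple, every `σ`-eigenvector of `H₁` is a multiple of `e₀`.
-/

open Matrix Module Finset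
open scoped ComplexOrder

theorem Submodule.exists_mem_ne_zero_apply_eq_zero {K V : Type*} [Field K] [AddCommGroup V]
    [Module K V] (p : Submodule K V) [FiniteDimensional K p] (hp : 1 < finrank K p)
    (φ : V →ₗ[K] K) : ∃ x ∈ p, x ≠ 0 ∧ φ x = 0 := by
  have hker : LinearMap.ker (φ ∘ₗ p.subtype) ≠ ⊥ :=
    LinearMap.ker_ne_bot_of_finrank_lt (by rwa [finrank_self])
  obtain ⟨⟨x, hx⟩, hφx, hx0⟩ := (Submodule.ne_bot_iff _).mp hker
  exact ⟨x, hx, by simpa using hx0, hφx⟩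

theorem Matrix.fromBlocks_mulVec_sumElim_zero_eq_smul_iff {l m α : Type*} [Fintype l] [Fintype m]
    [NonUnitalNonAssocSemiring α] (A : Matrix l l α) (B : Matrix l m α) (C : Matrix m l α)
    (D : Matrix m m α) (x : l → α) (c : α) :
    fromBlocks A B C D *ᵥ Sum.elim x 0 = c • Sum.elim x 0 ↔ A *ᵥ x = c • x ∧ C *ᵥ x = 0 := by
  have hsmul : c • Sum.elim x (0 : m → α) = Sum.elim (c • x) 0 := by
    ext (i | i) <;> simp
  simp [fromBlocks_mulVec, hsmul, Sum.elim_eq_iff]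

namespace Matrix.IsHermitian

variable {𝕜 n m : Type*} [RCLike 𝕜] [Fintype n] [DecidableEq n] {A : Matrix n n 𝕜}

open scoped MatrixOrder in
theorem posSemidef_sub_algebraMap_iff (hA : A.IsHermitian) (σ : ℝ) :
    (A - algebraMap ℝ (Matrix n n 𝕜) σ).PosSemidef ↔ ∀ i, σ ≤ hA.eigenvalues i := by
  rw [← le_iff, algebraMap_le_iff_le_spectrum (ha := hA.isSelfAdjoint),
    hA.spectrum_real_eq_range_eigenvalues, Set.forall_mem_range]

theorem le_eigenvalues_of_submatrix [Fintype m] [DecidableEq m] (hA : A.IsHermitian)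
    {B : Matrix m m 𝕜} (hB : B.IsHermitian) {e : m → n} (he : Function.Injective e)
    (hAB : A.submatrix e e = B) {σ : ℝ} (hσ : ∀ i, σ ≤ hA.eigenvalues i) (k : m) :
    σ ≤ hB.eigenvalues k := by
  have hsub : (A - algebraMap ℝ (Matrix n n 𝕜) σ).submatrix e e = B - algebraMap ℝ _ σ := by
    ext a b
    simp [← hAB, algebraMap_matrix_apply, he.eq_iff]
  have hpsd := ((hA.posSemidef_sub_algebraMap_iff σ).mpr hσ).submatrix e
  rw [hsub] at hpsd
  exact (hB.posSemidef_sub_algebraMap_iff σ).mp hpsd k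

theorem mem_eigenspace_toLin'_iff {μ : 𝕜} {x : n → 𝕜} :
    x ∈ End.eigenspace (toLin' A) μ ↔ A *ᵥ x = μ • x := by
  rw [End.mem_eigenspace_iff, toLin'_apply]

theorem finrank_eigenspace_toLin' (hA : A.IsHermitian) (μ : ℝ) :
    finrank 𝕜 (End.eigenspace (toLin' A) (μ : 𝕜)) = #{i | hA.eigenvalues i = μ} := by
  have hmap : End.eigenspace (toLin' A) (μ : 𝕜) =
      (End.eigenspace (toEuclideanLin A) (μ : 𝕜)).map
        (WithLp.linearEquiv 2 𝕜 (n → 𝕜) : EuclideanSpace 𝕜 n →ₗ[𝕜] n → 𝕜) := by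
    ext x
    simp [← WithLp.toLp_smul]
  rw [hmap, LinearEquiv.finrank_map_eq,
    ← (isSymmetric_toEuclideanLin_iff.mpr hA).card_filter_eigenvalues_eq finrank_euclideanSpace]
  refine Finset.card_equiv (Fintype.equivOfCardEq (Fintype.card_fin _)) fun i => ?_
  simp only [Finset.mem_filter, Finset.mem_univ, true_and]
  rw [IsHermitian.eigenvalues, Equiv.symm_apply_apply, IsHermitian.eigenvalues₀, RCLike.ofReal_inj]

theorem exists_eigenvalues_eq_of_mulVec_eq_smul (hA : A.IsHermitian) {σ : ℝ} {x : n → 𝕜}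
    (hx : A *ᵥ x = (σ : 𝕜) • x) (hx0 : x ≠ 0) : ∃ i, hA.eigenvalues i = σ := by
  have hpos : 1 ≤ finrank 𝕜 (End.eigenspace (toLin' A) (σ : 𝕜)) :=
    Submodule.one_le_finrank_iff.mpr ((Submodule.ne_bot_iff _).mpr
      ⟨x, mem_eigenspace_toLin'_iff.mpr hx, hx0⟩)
  rw [hA.finrank_eigenspace_toLin', Finset.one_le_card] at hpos
  obtain ⟨i, hi⟩ := hpos
  exact ⟨i, (Finset.mem_filter.mp hi).2⟩

theorem exists_mulVec_eq_smul_apply_eq_zero (hA : A.IsHermitian) {σ : ℝ} {i j : n} (hij : i ≠ j)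
    (hi : hA.eigenvalues i = σ) (hj : hA.eigenvalues j = σ) (φ : (n → 𝕜) →ₗ[𝕜] 𝕜) :
    ∃ x ≠ 0, A *ᵥ x = (σ : 𝕜) • x ∧ φ x = 0 := by
  have hdim : 1 < #{k | hA.eigenvalues k = σ} :=
    Finset.one_lt_card.mpr ⟨i, by simpa using hi, j, by simpa using hj, hij⟩
  rw [← hA.finrank_eigenspace_toLin'] at hdim
  obtain ⟨x, hx, hx0, hφx⟩ := Submodule.exists_mem_ne_zero_apply_eq_zero _ hdim φ
  exact ⟨x, hx0, mem_eigenspace_toLin'_iff.mp hx, hφx⟩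

theorem exists_smul_eq_of_injective_eigenvalues (hA : A.IsHermitian)
    (hinj : Function.Injective hA.eigenvalues) {σ : ℝ} {x y : n → 𝕜}
    (hx : A *ᵥ x = (σ : 𝕜) • x) (hx0 : x ≠ 0) (hy : A *ᵥ y = (σ : 𝕜) • y) :
    ∃ c : 𝕜, c • x = y := by
  set p := End.eigenspace (toLin' A) (σ : 𝕜)
  have hxp : x ∈ p := mem_eigenspace_toLin'_iff.mpr hx
  have hp : finrank 𝕜 p = 1 := by
    refine le_antisymm ?_ (Submodule.one_le_finrank_iff.mpr ((Submodule.ne_bot_iff p).mpr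
      ⟨x, hxp, hx0⟩))
    rw [hA.finrank_eigenspace_toLin']
    exact Finset.card_le_one.mpr fun a ha b hb => hinj (by simp_all)
  obtain ⟨c, hc⟩ := exists_smul_eq_of_finrank_eq_one hp (x := ⟨x, hxp⟩) (by simpa using hx0)
    ⟨y, mem_eigenspace_toLin'_iff.mpr hy⟩
  exact ⟨c, congrArg Subtype.val hc⟩

end Matrix.IsHermitian

/-- Cauchy interlacing-type statement used for 3×3 fault points: if the Hermitian
matrix `H = [[H₁, v], [vᴴ, h]]`, with `H₁` a 2×2 Hermitian matrix having two distinct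
eigenvalues, has its smallest eigenvalue `σ` of multiplicity at least 2, then `σ` is
the smallest eigenvalue of `H₁` and every eigenvector of `H₁` for `σ` is orthogonal
to `v`. -/
theorem double_smallest_eigenvalue_bordered_hermitian
    (H₁ : Matrix (Fin 2) (Fin 2) ℂ) (hH₁ : H₁.IsHermitian)
    (hdist : hH₁.eigenvalues 0 ≠ hH₁.eigenvalues 1)
    (v : Fin 2 → ℂ) (h : ℝ)
    (H : Matrix (Fin 2 ⊕ Unit) (Fin 2 ⊕ Unit) ℂ)
    (hHdef : H = Matrix.fromBlocks H₁ (Matrix.of fun i (_ : Unit) => v i)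
      (Matrix.of fun (_ : Unit) j => star (v j)) (Matrix.of fun (_ : Unit) (_ : Unit) => (h : ℂ)))
    (hH : H.IsHermitian) (σ : ℝ)
    (hσmin : σ = ⨅ i, hH.eigenvalues i)
    (hσmult : ∃ i j : Fin 2 ⊕ Unit, i ≠ j ∧ hH.eigenvalues i = σ ∧ hH.eigenvalues j = σ) :
    σ = (⨅ i, hH₁.eigenvalues i) ∧
    ∀ e : Fin 2 → ℂ, e ≠ 0 → H₁.mulVec e = (σ : ℂ) • e → star v ⬝ᵥ e = 0 := by
  obtain ⟨i, j, hij, hi, hj⟩ := hσmult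
  have hσH : ∀ k, σ ≤ hH.eigenvalues k := fun k => hσmin ▸ ciInf_le (Finite.bddBelow_range _) k
  have hσH₁ : ∀ k, σ ≤ hH₁.eigenvalues k :=
    hH.le_eigenvalues_of_submatrix hH₁ Sum.inl_injective (by rw [hHdef]; rfl) hσH
  obtain ⟨x, hx0, hx, hxr⟩ :=
    hH.exists_mulVec_eq_smul_apply_eq_zero hij hi hj (LinearMap.proj (Sum.inr ()))
  set e₀ := x ∘ Sum.inl
  have hx_eq : x = Sum.elim e₀ 0 := by
    ext (k | u)
    · rfl
    · exact hxr
  rw [hx_eq, hHdef, fromBlocks_mulVec_sumElim_zero_eq_smul_iff] at hx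
  obtain ⟨he₀, hC⟩ := hx
  have hve₀ : star v ⬝ᵥ e₀ = 0 := congrFun hC ()
  have he₀0 : e₀ ≠ 0 := fun h0 => hx0 (by rw [hx_eq, h0, Sum.elim_zero_zero])
  have hinj : Function.Injective hH₁.eigenvalues := by
    intro a b hab
    fin_cases a <;> fin_cases b <;> simp_all [eq_comm]
  obtain ⟨s, hs⟩ := hH₁.exists_eigenvalues_eq_of_mulVec_eq_smul he₀ he₀0
  refine ⟨le_antisymm (le_ciInf hσH₁) (hs ▸ ciInf_le (Finite.bddBelow_range _) s), ?_⟩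
  intro e _ he
  obtain ⟨c, rfl⟩ := hH₁.exists_smul_eq_of_injective_eigenvalues hinj he₀ he₀0 he
  rw [dotProduct_smul, hve₀, smul_zero]
end
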